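/- arXiv:2108.04159 — 6 statements merged into one kernel-verified Lean document; each statement's English description precedes it below -/
import Mathlib

section
/- For all α ∈ [0,2) and all u ∈ C_c^∞(0,1), ∫₀¹ x² u'(x)² dx ≤ ∫₀¹ (x^α u'(x)² − μ(α) u(x)²/x^{2-α}) dx + ((1-α)(α-3)/4) ∫₀¹ u(x)² dx, where μ(α) = (1-α)²/4. -/
open Set MeasureTheory

lemma hardy_ptwise (α x v d : ℝ) (hx : 0 < x) :
    (x ^ α * d^2 - (1 - α)^2 / 4 * v^2 / x ^ (2 - α)) + (1 - α) * (α - 3) / 4 * v^2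
      - x ^ (2:ℝ) * d^2
    = (x ^ α - x ^ (2:ℝ)) * (d + ((α-1)/2) * v / x)^2
      - ((((α-1)/2) * ((α-1) * x ^ (α-2) - 1)) * v^2
          + ((α-1)/2) * (x ^ (α-1) - x) * (2 * v * d)) := by
  have h2 : x ^ (2:ℝ) = x * x := by
    rw [show (2:ℝ) = ((2:ℕ):ℝ) by norm_num, Real.rpow_natCast]; ring
  have e1 : x ^ (α-1) = x ^ α / x := by rw [Real.rpow_sub hx, Real.rpow_one]
  have e2 : x ^ (α-2) = x ^ α / (x * x) := by rw [Real.rpow_sub hx, h2]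
  have e3 : x ^ (2-α) = (x * x) / x ^ α := by rw [Real.rpow_sub hx, h2]
  have ha : x ^ α ≠ 0 := (Real.rpow_pos_of_pos hx α).ne'
  rw [e1, e2, e3, h2]
  field_simp
  ring

lemma hardy_integrable {f : ℝ → ℝ} (hf : ContinuousOn f (Ioo 0 1)) {M : ℝ}
    (hM : ∀ x ∈ Ioo (0:ℝ) 1, |f x| ≤ M) : IntegrableOn f (Ioo (0:ℝ) 1) := by
  refine ⟨hf.aestronglyMeasurable measurableSet_Ioo,
    HasFiniteIntegral.restrict_of_bounded (C := M) (by simp [Real.volume_Ioo]) ?_⟩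
  filter_upwards [ae_restrict_mem measurableSet_Ioo] with x hx
  rw [Real.norm_eq_abs]
  exact hM x hx

theorem hardy_type_inequality_with_correction
    (α : ℝ) (hα : α ∈ Set.Ico (0:ℝ) 2)
    (u : ℝ → ℝ) (hu : ContDiff ℝ (⊤ : ℕ∞) u)
    (hsupp : ∀ x : ℝ, x ∉ Set.Ioo (0:ℝ) 1 → u x = 0) :
    ∫ x in Set.Ioo (0:ℝ) 1, x ^ (2:ℝ) * (deriv u x)^2 ≤
      (∫ x in Set.Ioo (0:ℝ) 1,
        (x ^ α * (deriv u x)^2 - ((1 - α)^2 / 4) * (u x)^2 / x ^ (2 - α)))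
      + ((1 - α) * (α - 3) / 4) * ∫ x in Set.Ioo (0:ℝ) 1, (u x)^2 := by
  obtain ⟨hα0, hα2⟩ := hα
  set l : ℝ := (α - 1) / 2 with hl
  set D : ℝ → ℝ := deriv u with hD
  have hu0 : u 0 = 0 := hsupp 0 (by simp)
  have hu1 : u 1 = 0 := hsupp 1 (by simp)
  have hudiff : Differentiable ℝ u := hu.differentiable (by simp)
  have hucont : Continuous u := hu.continuous
  have hu2 : ContDiff ℝ (⊤:ℕ∞) u := hu.of_le (by simp)
  have hDc : Continuous D := (contDiff_infty_iff_deriv.mp hu2).2.continuous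
  obtain ⟨K, hK⟩ : ∃ K, ∀ x ∈ Icc (0:ℝ) 1, ‖D x‖ ≤ K :=
    isCompact_Icc.exists_bound_of_continuousOn hDc.continuousOn
  have hK0 : 0 ≤ K := le_trans (norm_nonneg _) (hK 0 (by norm_num))
  have huK : ∀ x ∈ Icc (0:ℝ) 1, |u x| ≤ K * x := by
    intro x hx
    have := (convex_Icc (0:ℝ) 1).norm_image_sub_le_of_norm_deriv_le
      (fun y _ => hudiff y) hK (by norm_num : (0:ℝ) ∈ Icc (0:ℝ) 1) hx
    simpa [hu0, abs_of_nonneg hx.1] using this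
  set F : ℝ → ℝ := fun x => l * (x ^ (α-1) - x) * (u x)^2 with hFdef
  set F' : ℝ → ℝ := fun x =>
    (l * ((α-1) * x ^ (α-2) - 1)) * (u x)^2 + l * (x ^ (α-1) - x) * (2 * u x * D x)
    with hF'def
  set G : ℝ → ℝ := fun x => (x ^ α - x ^ (2:ℝ)) * (D x + l * u x / x)^2 with hGdef
  clear_value D F F' G
  -- continuity helper
  have hrp : ∀ p : ℝ, ContinuousOn (fun x : ℝ => x ^ p) (Ioo (0:ℝ) 1) := fun p x hx =>
    (Real.continuousAt_rpow_const x p (Or.inl hx.1.ne')).continuousWithinAt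
  -- rpow facts on (0,1)
  have hfacts : ∀ x ∈ Ioo (0:ℝ) 1,
      x ^ α ≤ 1 ∧ x ^ (2:ℝ) ≤ 1 ∧ x ^ (α-1) * x = x ^ α ∧ x ^ (α-2) * (x*x) = x ^ α ∧
        x ^ (2:ℝ) ≤ x ^ (2-α) ∧ 0 < x ^ (2-α) ∧ 0 < x ^ (α-1) ∧ 0 < x ^ (α-2) ∧
        x ^ (2:ℝ) = x * x := by
    intro x hx
    obtain ⟨hx0, hx1⟩ := hx
    have h2 : x ^ (2:ℝ) = x * x := by
      rw [show (2:ℝ) = ((2:ℕ):ℝ) by norm_num, Real.rpow_natCast]; ring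
    refine ⟨Real.rpow_le_one hx0.le hx1.le hα0, Real.rpow_le_one hx0.le hx1.le (by norm_num),
      ?_, ?_, Real.rpow_le_rpow_of_exponent_ge hx0 hx1.le (by linarith), Real.rpow_pos_of_pos hx0 _,
      Real.rpow_pos_of_pos hx0 _, Real.rpow_pos_of_pos hx0 _, h2⟩
    · have h := Real.rpow_add hx0 (α-1) 1
      rw [Real.rpow_one] at h
      rw [← h]; norm_num
    · have h := Real.rpow_add hx0 (α-2) 2
      rw [h2] at h
      rw [← h]; norm_num
  have hIcc : ∀ x ∈ Ioo (0:ℝ) 1, x ∈ Icc (0:ℝ) 1 := fun x hx => ⟨hx.1.le, hx.2.le⟩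
  have hsq : ∀ a b : ℝ, |a| ≤ b → a^2 ≤ b^2 := by
    intro a b h
    calc a^2 = |a|^2 := (sq_abs a).symm
    _ ≤ b^2 := by nlinarith [abs_nonneg a]
  -- continuity facts
  have hc1 : ContinuousOn
      (fun x : ℝ => x ^ α * (D x)^2 - (1-α)^2/4 * (u x)^2 / x ^ (2-α)) (Ioo (0:ℝ) 1) :=
    ((hrp α).mul ((hDc.continuousOn).pow 2)).sub
      ((continuousOn_const.mul ((hucont.continuousOn).pow 2)).div (hrp (2-α))
        (fun x hx => (Real.rpow_pos_of_pos hx.1 _).ne'))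
  have hc2 : ContinuousOn (fun x : ℝ => (u x)^2) (Ioo (0:ℝ) 1) :=
    (hucont.continuousOn).pow 2
  have hc3 : ContinuousOn (fun x : ℝ => x ^ (2:ℝ) * (D x)^2) (Ioo (0:ℝ) 1) :=
    (hrp 2).mul ((hDc.continuousOn).pow 2)
  have hcG : ContinuousOn G (Ioo (0:ℝ) 1) := by
    rw [hGdef]
    exact ((hrp α).sub (hrp 2)).mul
      (((hDc.continuousOn).add ((continuousOn_const.mul hucont.continuousOn).div
        continuousOn_id (fun x hx => hx.1.ne'))).pow 2)
  have hcF' : ContinuousOn F' (Ioo (0:ℝ) 1) := by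
    rw [hF'def]
    exact ((continuousOn_const.mul ((continuousOn_const.mul (hrp (α-2))).sub
        continuousOn_const)).mul ((hucont.continuousOn).pow 2)).add
      ((continuousOn_const.mul ((hrp (α-1)).sub continuousOn_id)).mul
        ((continuousOn_const.mul hucont.continuousOn).mul (hDc.continuousOn)))
  -- integrability
  have hint1 : IntegrableOn
      (fun x => x ^ α * (D x)^2 - (1-α)^2/4 * (u x)^2 / x ^ (2-α)) (Ioo (0:ℝ) 1) := by
    apply hardy_integrable hc1 (M := K^2 + (1-α)^2/4 * K^2)
    intro x hx
    obtain ⟨h1, h2, h3, h4, h5, h6, h7, h8, h9⟩ := hfacts x hx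
    have hu' : |u x| ≤ K * x := huK x (hIcc x hx)
    have hd : |D x| ≤ K := hK x (hIcc x hx)
    have hx0 : (0:ℝ) < x := hx.1
    have hxa : 0 < x ^ α := Real.rpow_pos_of_pos hx0 α
    have hd2 : (D x)^2 ≤ K^2 := hsq _ _ hd
    have hu2' : (u x)^2 ≤ K^2 * (x*x) := by
      calc (u x)^2 ≤ (K*x)^2 := hsq _ _ hu'
      _ = K^2 * (x*x) := by ring
    have hA : x ^ α * (D x)^2 ≤ K^2 := by
      calc x ^ α * (D x)^2 ≤ 1 * K^2 := mul_le_mul h1 hd2 (sq_nonneg _) zero_le_one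
      _ = K^2 := one_mul _
    have hA0 : 0 ≤ x ^ α * (D x)^2 := mul_nonneg hxa.le (sq_nonneg _)
    have hBle : (u x)^2 / x ^ (2-α) ≤ K^2 := by
      rw [div_le_iff₀ h6]
      calc (u x)^2 ≤ K^2 * (x*x) := hu2'
      _ = K^2 * x ^ (2:ℝ) := by rw [h9]
      _ ≤ K^2 * x ^ (2-α) := mul_le_mul_of_nonneg_left h5 (sq_nonneg K)
    have hB0 : 0 ≤ (u x)^2 / x ^ (2-α) := div_nonneg (sq_nonneg _) h6.le
    have hμ : (0:ℝ) ≤ (1-α)^2/4 := by positivity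
    rw [abs_le, mul_div_assoc]
    constructor <;> linarith [mul_le_mul_of_nonneg_left hBle hμ, mul_nonneg hμ hB0, sq_nonneg K]
  have hint2 : IntegrableOn (fun x => (u x)^2) (Ioo (0:ℝ) 1) := by
    apply hardy_integrable hc2 (M := K^2)
    intro x hx
    have hu' : |u x| ≤ K * x := huK x (hIcc x hx)
    rw [abs_of_nonneg (sq_nonneg _)]
    have hxx : x * x ≤ 1 := mul_le_one₀ hx.2.le hx.1.le hx.2.le
    calc (u x)^2 ≤ (K*x)^2 := hsq _ _ (huK x (hIcc x hx))
    _ = K^2 * (x*x) := by ring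
    _ ≤ K^2 * 1 := mul_le_mul_of_nonneg_left hxx (sq_nonneg K)
    _ = K^2 := mul_one _
  have hint3 : IntegrableOn (fun x => x ^ (2:ℝ) * (D x)^2) (Ioo (0:ℝ) 1) := by
    apply hardy_integrable hc3 (M := K^2)
    intro x hx
    obtain ⟨h1, h2, h3, h4, h5, h6, h7, h8, h9⟩ := hfacts x hx
    have hd2 : (D x)^2 ≤ K^2 := hsq _ _ (hK x (hIcc x hx))
    have hp : 0 < x ^ (2:ℝ) := Real.rpow_pos_of_pos hx.1 _
    rw [abs_of_nonneg (mul_nonneg hp.le (sq_nonneg _))]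
    calc x ^ (2:ℝ) * (D x)^2 ≤ 1 * K^2 := mul_le_mul h2 hd2 (sq_nonneg _) zero_le_one
    _ = K^2 := one_mul _
  have hintG : IntegrableOn G (Ioo (0:ℝ) 1) := by
    apply hardy_integrable hcG (M := (K + |l| * K)^2)
    intro x hx
    obtain ⟨h1, h2, h3, h4, h5, h6, h7, h8, h9⟩ := hfacts x hx
    have hx0 : (0:ℝ) < x := hx.1
    have hu' : |u x| ≤ K * x := huK x (hIcc x hx)
    have hd : |D x| ≤ K := hK x (hIcc x hx)
    have h10 : x ^ (2:ℝ) ≤ x ^ α :=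
      Real.rpow_le_rpow_of_exponent_ge hx0 hx.2.le hα2.le
    have habs : |D x + l * u x / x| ≤ K + |l| * K := by
      refine (abs_add_le _ _).trans (add_le_add hd ?_)
      rw [abs_div, abs_mul, abs_of_pos hx0, div_le_iff₀ hx0]
      calc |l| * |u x| ≤ |l| * (K * x) := mul_le_mul_of_nonneg_left hu' (abs_nonneg l)
      _ = |l| * K * x := by ring
    have hsq' : (D x + l * u x / x)^2 ≤ (K + |l| * K)^2 := hsq _ _ habs
    have hw0 : 0 ≤ x ^ α - x ^ (2:ℝ) := sub_nonneg.mpr h10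
    simp only [hGdef]
    rw [abs_of_nonneg (mul_nonneg hw0 (sq_nonneg _))]
    calc (x ^ α - x ^ (2:ℝ)) * (D x + l * u x / x)^2
        ≤ 1 * (K + |l| * K)^2 := by
          refine mul_le_mul ?_ hsq' (sq_nonneg _) zero_le_one
          have : 0 ≤ x ^ (2:ℝ) := Real.rpow_nonneg hx0.le _
          linarith
    _ = (K + |l| * K)^2 := one_mul _
  have hintF' : IntegrableOn F' (Ioo (0:ℝ) 1) := by
    apply hardy_integrable hcF' (M := |l| * ((|α-1| + 1) * K^2) + |l| * (4 * K^2))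
    intro x hx
    obtain ⟨h1, h2, h3, h4, h5, h6, h7, h8, h9⟩ := hfacts x hx
    have hx0 : (0:ℝ) < x := hx.1
    have hx1 : x < 1 := hx.2
    have hu' : |u x| ≤ K * x := huK x (hIcc x hx)
    have hd : |D x| ≤ K := hK x (hIcc x hx)
    have hu2' : (u x)^2 ≤ K^2 * (x*x) := by
      calc (u x)^2 ≤ (K*x)^2 := hsq _ _ hu'
      _ = K^2 * (x*x) := by ring
    have hxx1 : x * x ≤ 1 := mul_le_one₀ hx1.le hx0.le hx1.le
    have t1 : |(l * ((α-1) * x ^ (α-2) - 1)) * (u x)^2| ≤ |l| * ((|α-1| + 1) * K^2) := by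
      rw [abs_mul, abs_mul, abs_of_nonneg (sq_nonneg (u x)), mul_assoc]
      refine mul_le_mul_of_nonneg_left ?_ (abs_nonneg l)
      · show |(α-1) * x ^ (α-2) - 1| * (u x)^2 ≤ (|α-1| + 1) * K^2
        have e1 : |(α-1) * x ^ (α-2) - 1| ≤ |α-1| * x ^ (α-2) + 1 := by
          refine (abs_sub _ _).trans ?_
          rw [abs_mul, abs_of_pos h8, abs_one]
        have p1 : |α-1| * x ^ (α-2) * (u x)^2 ≤ |α-1| * x ^ (α-2) * (K^2*(x*x)) :=
          mul_le_mul_of_nonneg_left hu2' (by positivity)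
        have p2 : |α-1| * x ^ (α-2) * (K^2*(x*x)) = |α-1| * K^2 * x^α := by
          rw [← h4]; ring
        have p3 : |α-1| * K^2 * x^α ≤ |α-1| * K^2 * 1 :=
          mul_le_mul_of_nonneg_left h1 (by positivity)
        have p4 : (u x)^2 ≤ K^2 := by
          calc (u x)^2 ≤ K^2 * (x*x) := hu2'
          _ ≤ K^2 * 1 := mul_le_mul_of_nonneg_left hxx1 (sq_nonneg K)
          _ = K^2 := mul_one _
        have e2 : (|α-1| * x ^ (α-2) + 1) * (u x)^2
            = |α-1| * x ^ (α-2) * (u x)^2 + (u x)^2 := by ring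
        have q := mul_le_mul_of_nonneg_right e1 (sq_nonneg (u x))
        rw [e2] at q
        linarith [p1, p2.le, p2.ge, p3, p4, q]
    have t2 : |l * (x ^ (α-1) - x) * (2 * u x * D x)| ≤ |l| * (4 * K^2) := by
      rw [abs_mul, abs_mul, mul_assoc]
      refine mul_le_mul_of_nonneg_left ?_ (abs_nonneg l)
      have e1 : |x ^ (α-1) - x| ≤ x ^ (α-1) + x := by
        refine (abs_sub _ _).trans ?_
        rw [abs_of_pos h7, abs_of_pos hx0]
      have e2 : |2 * u x * D x| ≤ 2 * (K * x) * K := by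
        rw [abs_mul, abs_mul, abs_two]
        have := mul_le_mul (mul_le_mul_of_nonneg_left hu' (by norm_num : (0:ℝ) ≤ 2))
          hd (abs_nonneg (D x)) (by positivity)
        linarith
      have e3 : (x ^ (α-1) + x) * (2 * (K * x) * K) = 2 * K^2 * (x ^ (α-1) * x) + 2 * K^2 * (x*x) := by
        ring
      have := mul_le_mul e1 e2 (abs_nonneg _) (by positivity)
      rw [e3, h3] at this
      have r1 : 2 * K^2 * x ^ α ≤ 2 * K^2 * 1 :=
        mul_le_mul_of_nonneg_left h1 (by positivity)
      have r2 : 2 * K^2 * (x*x) ≤ 2 * K^2 * 1 :=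
        mul_le_mul_of_nonneg_left hxx1 (by positivity)
      linarith [this, r1, r2]
    simp only [hF'def]
    calc |(l * ((α-1) * x ^ (α-2) - 1)) * (u x)^2 + l * (x ^ (α-1) - x) * (2 * u x * D x)|
        ≤ |(l * ((α-1) * x ^ (α-2) - 1)) * (u x)^2|
        + |l * (x ^ (α-1) - x) * (2 * u x * D x)| := abs_add_le _ _
    _ ≤ |l| * ((|α-1| + 1) * K^2) + |l| * (4 * K^2) := add_le_add t1 t2
  -- derivative of F
  have hFderiv : ∀ x ∈ Ioo (0:ℝ) 1, HasDerivAt F (F' x) x := by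
    intro x hx
    have hx0 : (0:ℝ) < x := hx.1
    have hd1 : HasDerivAt (fun y : ℝ => l * (y ^ (α-1) - y))
        (l * ((α-1) * x ^ (α-2) - 1)) x := by
      have h := ((Real.hasDerivAt_rpow_const (x := x) (p := α-1)
        (Or.inl hx0.ne')).sub (hasDerivAt_id x)).const_mul l
      rw [show α - 1 - 1 = α - 2 by ring] at h
      exact h
    have hd2 : HasDerivAt (fun y => (u y)^2) (2 * u x * D x) x := by
      have h := ((hudiff x).hasDerivAt).pow 2
      rw [hD]
      norm_num at h
      exact h
    have h := hd1.mul hd2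
    rw [hFdef, hF'def]
    exact h
  -- continuity of F on the closed interval
  have hFcont : ContinuousOn F (Icc (0:ℝ) 1) := by
    intro x hx
    rcases eq_or_lt_of_le hx.1 with h0 | h0
    · -- x = 0
      have hF0 : F 0 = 0 := by rw [hFdef]; simp [hu0]
      rw [← h0]
      show ContinuousWithinAt F (Icc (0:ℝ) 1) 0
      unfold ContinuousWithinAt
      rw [hF0]
      apply squeeze_zero_norm' (a := fun x : ℝ => |l| * K^2 * (x ^ (α+1) + x^2*x))
      · filter_upwards [self_mem_nhdsWithin] with y hy
        rcases eq_or_lt_of_le hy.1 with hy0 | hy0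
        · rw [← hy0, hF0, Real.zero_rpow (show α+1 ≠ 0 by intro hcon; linarith)]
          simp
        · have hyK : |u y| ≤ K * y := huK y hy
          have hr1 : (0:ℝ) < y ^ (α-1) := Real.rpow_pos_of_pos hy0 _
          have hmul : y ^ (α-1) * (y * y) = y ^ (α+1) := by
            have h := Real.rpow_add hy0 (α-1) 2
            have h2 : y ^ (2:ℝ) = y * y := by
              rw [show (2:ℝ) = ((2:ℕ):ℝ) by norm_num, Real.rpow_natCast]; ring
            rw [h2] at h
            rw [← h]
            congr 1
            ring
          have hF : ‖F y‖ = |l| * |y ^ (α-1) - y| * (u y)^2 := by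
            rw [hFdef]
            simp only [Real.norm_eq_abs, abs_mul, abs_of_nonneg (sq_nonneg (u y))]
          rw [hF]
          have e1 : |y ^ (α-1) - y| ≤ y ^ (α-1) + y := by
            refine (abs_sub _ _).trans ?_
            rw [abs_of_pos hr1, abs_of_pos hy0]
          have e2 : (u y)^2 ≤ K^2 * (y*y) := by
            calc (u y)^2 ≤ (K*y)^2 := hsq _ _ hyK
            _ = K^2 * (y*y) := by ring
          calc |l| * |y ^ (α-1) - y| * (u y)^2
              ≤ |l| * ((y ^ (α-1) + y) * (K^2 * (y*y))) := by
                rw [mul_assoc]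
                refine mul_le_mul_of_nonneg_left ?_ (abs_nonneg l)
                exact mul_le_mul e1 e2 (sq_nonneg _) (by positivity)
          _ = |l| * K^2 * (y ^ (α-1) * (y*y) + y^2*y) := by ring
          _ = |l| * K^2 * (y ^ (α+1) + y^2*y) := by rw [hmul]
      · have hc : ContinuousWithinAt
            (fun x : ℝ => |l| * K^2 * (x ^ (α+1) + x^2*x)) (Icc (0:ℝ) 1) 0 := by
          apply ContinuousWithinAt.mul continuousWithinAt_const
          apply ContinuousWithinAt.add
          · exact (Real.continuousAt_rpow_const 0 (α+1)
              (Or.inr (by linarith))).continuousWithinAt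
          · exact (((continuous_pow 2).mul continuous_id).continuousAt).continuousWithinAt
        have hb0 : |l| * K ^ 2 * ((0:ℝ) ^ (α + 1) + (0:ℝ) ^ 2 * 0) = 0 := by
          rw [Real.zero_rpow (show α+1 ≠ 0 by intro hcon; linarith)]; ring
        have ht := hc.tendsto
        simp only [hb0] at ht
        exact ht
    · -- 0 < x
      have : ContinuousAt F x := by
        rw [hFdef]
        exact (continuousAt_const.mul ((Real.continuousAt_rpow_const x (α-1)
          (Or.inl h0.ne')).sub continuousAt_id)).mul ((hucont.continuousAt).pow 2)
      exact this.continuousWithinAt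
  -- FTC: the integral of F' vanishes
  have hFint : IntervalIntegrable F' volume 0 1 := by
    rw [intervalIntegrable_iff_integrableOn_Ioo_of_le zero_le_one]
    exact hintF'
  have hftc : ∫ y in (0:ℝ)..1, F' y = F 1 - F 0 :=
    intervalIntegral.integral_eq_sub_of_hasDeriv_right_of_le zero_le_one hFcont
      (fun x hx => (hFderiv x hx).hasDerivWithinAt) hFint
  have hF0 : F 0 = 0 := by rw [hFdef]; simp [hu0]
  have hF1 : F 1 = 0 := by rw [hFdef]; simp [hu1]
  have hF'zero : ∫ x in Ioo (0:ℝ) 1, F' x = 0 := by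
    rw [intervalIntegral.integral_of_le zero_le_one, integral_Ioc_eq_integral_Ioo] at hftc
    rw [hftc, hF0, hF1, sub_zero]
  -- pointwise identity
  have hid : EqOn (fun x => (x ^ α * (D x)^2 - (1-α)^2/4 * (u x)^2 / x ^ (2-α))
      + (1-α)*(α-3)/4 * (u x)^2 - x ^ (2:ℝ) * (D x)^2) (fun x => G x - F' x)
      (Ioo (0:ℝ) 1) := by
    intro x hx
    have h := hardy_ptwise α x (u x) (D x) hx.1
    simp only [hGdef, hF'def, hl]
    exact h
  have hbig : ∫ x in Ioo (0:ℝ) 1, ((x ^ α * (D x)^2 - (1-α)^2/4 * (u x)^2 / x ^ (2-α))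
      + (1-α)*(α-3)/4 * (u x)^2 - x ^ (2:ℝ) * (D x)^2)
      = ∫ x in Ioo (0:ℝ) 1, (G x - F' x) :=
    setIntegral_congr_fun measurableSet_Ioo hid
  have hsplit : ∫ x in Ioo (0:ℝ) 1, ((x ^ α * (D x)^2 - (1-α)^2/4 * (u x)^2 / x ^ (2-α))
      + (1-α)*(α-3)/4 * (u x)^2 - x ^ (2:ℝ) * (D x)^2)
      = (∫ x in Ioo (0:ℝ) 1, (x ^ α * (D x)^2 - (1-α)^2/4 * (u x)^2 / x ^ (2-α)))
        + (1-α)*(α-3)/4 * (∫ x in Ioo (0:ℝ) 1, (u x)^2)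
        - ∫ x in Ioo (0:ℝ) 1, x ^ (2:ℝ) * (D x)^2 := by
    have hcm : IntegrableOn (fun x => (1-α)*(α-3)/4 * (u x)^2) (Ioo (0:ℝ) 1) :=
      hint2.const_mul _
    have hadd : IntegrableOn (fun x => (x ^ α * (D x)^2 - (1-α)^2/4 * (u x)^2 / x ^ (2-α))
        + (1-α)*(α-3)/4 * (u x)^2) (Ioo (0:ℝ) 1) := hint1.add hcm
    rw [integral_sub hadd hint3, integral_add hint1 hcm, MeasureTheory.integral_const_mul]
  have hGF : ∫ x in Ioo (0:ℝ) 1, (G x - F' x) = ∫ x in Ioo (0:ℝ) 1, G x := by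
    rw [integral_sub hintG hintF', hF'zero, sub_zero]
  have hGpos : 0 ≤ ∫ x in Ioo (0:ℝ) 1, G x := by
    apply setIntegral_nonneg measurableSet_Ioo
    intro x hx
    simp only [hGdef]
    have h10 : x ^ (2:ℝ) ≤ x ^ α :=
      Real.rpow_le_rpow_of_exponent_ge hx.1 hx.2.le hα2.le
    exact mul_nonneg (by linarith) (sq_nonneg _)
  linarith [hbig, hsplit, hGF, hGpos]
end

section
/- For all α ∈ [0,2) and all u ∈ C_c^∞(0,1), the weighted Hardy–Poincaré inequality ∫₀¹ u(x)² dx ≤ (16/(2-α)²) ∫₀¹ (x^α u'(x)² − μ(α) u(x)²/x^{2-α}) dx holds, where μ(α) = (1-α)²/4. -/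
open Set MeasureTheory Filter Topology

private lemma bdd_integrableOn (f : ℝ → ℝ) (hf : ContinuousOn f (Set.Ioo 0 1)) (K : ℝ)
    (hK : ∀ x ∈ Set.Ioo (0:ℝ) 1, |f x| ≤ K) :
    MeasureTheory.IntegrableOn f (Set.Ioo 0 1) := by
  have hconst : MeasureTheory.IntegrableOn (fun _ : ℝ => K) (Set.Ioo 0 1) :=
    MeasureTheory.integrableOn_const (by rw [Real.volume_Ioo]; exact ENNReal.ofReal_ne_top)
  exact MeasureTheory.Integrable.mono' hconst (hf.aestronglyMeasurable measurableSet_Ioo)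
    ((MeasureTheory.ae_restrict_iff' measurableSet_Ioo).2
      (Filter.Eventually.of_forall fun x hx => by simpa [Real.norm_eq_abs] using hK x hx))

private noncomputable def Fa (c l α : ℝ) (u : ℝ → ℝ) (x : ℝ) : ℝ :=
  (-c * x^(α-1) + l * x^(α/2)) * (u x)^2

private noncomputable def ga (c l α : ℝ) (u : ℝ → ℝ) (x : ℝ) : ℝ :=
  (c*(1-α)) * (x^(α-2)*(u x)^2) + (l*(α/2)) * (x^(α/2-1)*(u x)^2)
    + (-2*c) * (x^(α-1)*(u x * deriv u x)) + (2*l) * (x^(α/2)*(u x * deriv u x))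

private noncomputable def Sa (c l α : ℝ) (u : ℝ → ℝ) (x : ℝ) : ℝ :=
  (x^(α/2) * deriv u x - c * (x^(α/2-1) * u x) + l * u x)^2

private noncomputable def Ea (c l α : ℝ) (u : ℝ → ℝ) (x : ℝ) : ℝ :=
  x^α * (deriv u x)^2 - (1-α)^2/4 * (x^(α-2)*(u x)^2) + l^2*(u x)^2
    - (l*(2-α)/2) * (x^(α/2-1)*(u x)^2)

private lemma iden (α : ℝ) (u : ℝ → ℝ) {x : ℝ} (hx : 0 < x) :
    Sa ((1-α)/2) ((2-α)/4) α u x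
      = ga ((1-α)/2) ((2-α)/4) α u x + Ea ((1-α)/2) ((2-α)/4) α u x := by
  have ha : x^(α/2) * x^(α/2) = x^α := by rw [← Real.rpow_add hx]; congr 1; ring
  have hb : x^(α/2) * x^(α/2-1) = x^(α-1) := by rw [← Real.rpow_add hx]; congr 1; ring
  have hd : x^(α/2-1) * x^(α/2-1) = x^(α-2) := by rw [← Real.rpow_add hx]; congr 1; ring
  simp only [Sa, ga, Ea]
  rw [← ha, ← hb, ← hd]
  ring

private lemma hasDeriv_Fa (α : ℝ) (u : ℝ → ℝ) (hu : Differentiable ℝ u) {x : ℝ} (hx : x ≠ 0) :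
    HasDerivAt (Fa ((1-α)/2) ((2-α)/4) α u) (ga ((1-α)/2) ((2-α)/4) α u x) x := by
  have h1 : HasDerivAt (fun y : ℝ => -((1-α)/2) * y^(α-1) + (2-α)/4 * y^(α/2))
      (-((1-α)/2) * ((α-1) * x^(α-1-1)) + (2-α)/4 * ((α/2) * x^(α/2-1))) x :=
    ((Real.hasDerivAt_rpow_const (p := α-1) (Or.inl hx)).const_mul (-((1-α)/2))).add
      ((Real.hasDerivAt_rpow_const (p := α/2) (Or.inl hx)).const_mul ((2-α)/4))
  have h2 : HasDerivAt (fun y => (u y)^2) (2 * u x * deriv u x) x := by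
    simpa using ((hu x).hasDerivAt.fun_pow 2)
  have h3 := h1.fun_mul h2
  convert h3 using 1
  iterate 3 rfl
  simp only [ga]
  rw [show α - 1 - 1 = α - 2 by ring]
  ring

theorem weighted_hardy_poincare
    (α : ℝ) (hα : α ∈ Set.Ico (0:ℝ) 2)
    (u : ℝ → ℝ) (hu : ContDiff ℝ (⊤ : ℕ∞) u)
    (hsupp : ∀ x : ℝ, x ∉ Set.Ioo (0:ℝ) 1 → u x = 0) :
    ∫ x in Set.Ioo (0:ℝ) 1, (u x)^2 ≤
      (16 / (2 - α)^2) * ∫ x in Set.Ioo (0:ℝ) 1,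
        (x ^ α * (deriv u x)^2 - ((1 - α)^2 / 4) * (u x)^2 / x ^ (2 - α)) := by
  obtain ⟨hα0, hα2⟩ := hα
  have h2α : (0:ℝ) < 2 - α := by linarith
  set c : ℝ := (1 - α)/2 with hc
  set l : ℝ := (2 - α)/4 with hl
  have hl0 : 0 < l := by rw [hl]; linarith
  have hu_cont : Continuous u := hu.continuous
  have hd_cont : Continuous (deriv u) := hu.continuous_deriv (by simp)
  have hu_diff : Differentiable ℝ u := hu.differentiable (by simp)
  have hu0 : u 0 = 0 := hsupp 0 (by simp)
  have hu1 : u 1 = 0 := hsupp 1 (by simp)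
  obtain ⟨D₀, hD₀⟩ : ∃ C, ∀ x ∈ Icc (0:ℝ) 1, ‖deriv u x‖ ≤ C :=
    (isCompact_Icc).exists_bound_of_continuousOn hd_cont.continuousOn
  set D : ℝ := |D₀| + 1 with hD
  have hD0 : 0 ≤ D := by positivity
  have hDb : ∀ x ∈ Icc (0:ℝ) 1, |deriv u x| ≤ D := by
    intro x hx
    have := hD₀ x hx
    rw [Real.norm_eq_abs] at this
    have h2 : D₀ ≤ D := by rw [hD]; linarith [le_abs_self D₀]
    linarith
  -- linear bound on u
  have hulin : ∀ x ∈ Icc (0:ℝ) 1, |u x| ≤ D * x := by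
    intro x hx
    have h := Convex.norm_image_sub_le_of_norm_hasDerivWithin_le
      (f := u) (f' := deriv u) (s := Icc (0:ℝ) 1) (C := D)
      (fun y hy => (hu_diff y).hasDerivAt.hasDerivWithinAt)
      (fun y hy => by rw [Real.norm_eq_abs]; exact hDb y hy)
      (convex_Icc 0 1) (left_mem_Icc.2 zero_le_one) hx
    rw [hu0, sub_zero, sub_zero, Real.norm_eq_abs, Real.norm_eq_abs,
      abs_of_nonneg hx.1] at h
    exact h
  -- rpow helpers
  have hrle1 : ∀ (p : ℝ), 0 ≤ p → ∀ x ∈ Ioo (0:ℝ) 1, x ^ p ≤ 1 :=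
    fun p hp x hx => Real.rpow_le_one hx.1.le hx.2.le hp
  have hradd2 : ∀ (p : ℝ) {x : ℝ}, 0 < x → x ^ p * x^2 = x ^ (p+2) := by
    intro p x hx
    rw [← Real.rpow_natCast x 2, ← Real.rpow_add hx]
    norm_num
  have hradd1 : ∀ (p : ℝ) {x : ℝ}, 0 < x → x ^ p * x = x ^ (p+1) :=
    fun p x hx => (Real.rpow_add_one (ne_of_gt hx) p).symm
  -- monomial bounds
  have hm2 : ∀ (p : ℝ), 0 ≤ p + 2 → ∀ x ∈ Ioo (0:ℝ) 1, |x^p*(u x)^2| ≤ D^2 := by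
    intro p hp x hx
    have h1 : |u x| ≤ D*x := hulin x (Ioo_subset_Icc_self hx)
    have h2 : (u x)^2 ≤ (D*x)^2 := by
      rw [← sq_abs]; exact pow_le_pow_left₀ (abs_nonneg _) h1 2
    have h3 : (0:ℝ) ≤ x^p := (Real.rpow_pos_of_pos hx.1 p).le
    rw [abs_of_nonneg (mul_nonneg h3 (sq_nonneg _))]
    calc x^p*(u x)^2 ≤ x^p * (D*x)^2 := mul_le_mul_of_nonneg_left h2 h3
      _ = D^2 * (x^p * x^2) := by ring
      _ = D^2 * x^(p+2) := by rw [hradd2 p hx.1]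
      _ ≤ D^2 * 1 := mul_le_mul_of_nonneg_left (hrle1 _ hp x hx) (by positivity)
      _ = D^2 := mul_one _
  have hm11 : ∀ (p : ℝ), 0 ≤ p + 1 → ∀ x ∈ Ioo (0:ℝ) 1, |x^p*(u x * deriv u x)| ≤ D^2 := by
    intro p hp x hx
    have h1 : |u x| ≤ D*x := hulin x (Ioo_subset_Icc_self hx)
    have h1' : |deriv u x| ≤ D := hDb x (Ioo_subset_Icc_self hx)
    have h3 : (0:ℝ) ≤ x^p := (Real.rpow_pos_of_pos hx.1 p).le
    calc |x^p*(u x * deriv u x)| = x^p * (|u x| * |deriv u x|) := by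
          rw [abs_mul, abs_mul, abs_of_nonneg h3]
      _ ≤ x^p * ((D*x) * D) := by
          apply mul_le_mul_of_nonneg_left _ h3
          exact mul_le_mul h1 h1' (abs_nonneg _) (mul_nonneg hD0 hx.1.le)
      _ = D^2 * (x^p * x) := by ring
      _ = D^2 * x^(p+1) := by rw [hradd1 p hx.1]
      _ ≤ D^2 * 1 := mul_le_mul_of_nonneg_left (hrle1 _ hp x hx) (by positivity)
      _ = D^2 := mul_one _
  have hmu : ∀ (p : ℝ), 0 ≤ p + 1 → ∀ x ∈ Ioo (0:ℝ) 1, |x^p * u x| ≤ D := by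
    intro p hp x hx
    have h1 : |u x| ≤ D*x := hulin x (Ioo_subset_Icc_self hx)
    have h3 : (0:ℝ) ≤ x^p := (Real.rpow_pos_of_pos hx.1 p).le
    calc |x^p * u x| = x^p * |u x| := by rw [abs_mul, abs_of_nonneg h3]
      _ ≤ x^p * (D*x) := mul_le_mul_of_nonneg_left h1 h3
      _ = D * (x^p * x) := by ring
      _ = D * x^(p+1) := by rw [hradd1 p hx.1]
      _ ≤ D * 1 := mul_le_mul_of_nonneg_left (hrle1 _ hp x hx) hD0
      _ = D := mul_one _
  have hmd : ∀ (p : ℝ), 0 ≤ p → ∀ x ∈ Ioo (0:ℝ) 1, |x^p * deriv u x| ≤ D := by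
    intro p hp x hx
    have h1 : |deriv u x| ≤ D := hDb x (Ioo_subset_Icc_self hx)
    have h3 : (0:ℝ) ≤ x^p := (Real.rpow_pos_of_pos hx.1 p).le
    calc |x^p * deriv u x| = x^p * |deriv u x| := by rw [abs_mul, abs_of_nonneg h3]
      _ ≤ x^p * D := mul_le_mul_of_nonneg_left h1 h3
      _ ≤ 1 * D := mul_le_mul_of_nonneg_right (hrle1 _ hp x hx) hD0
      _ = D := one_mul _
  have hmdd : ∀ (p : ℝ), 0 ≤ p → ∀ x ∈ Ioo (0:ℝ) 1, |x^p * (deriv u x)^2| ≤ D^2 := by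
    intro p hp x hx
    have h1 : |deriv u x| ≤ D := hDb x (Ioo_subset_Icc_self hx)
    have h2 : (deriv u x)^2 ≤ D^2 := by
      rw [← sq_abs]; exact pow_le_pow_left₀ (abs_nonneg _) h1 2
    have h3 : (0:ℝ) ≤ x^p := (Real.rpow_pos_of_pos hx.1 p).le
    rw [abs_of_nonneg (mul_nonneg h3 (sq_nonneg _))]
    calc x^p * (deriv u x)^2 ≤ x^p * D^2 := mul_le_mul_of_nonneg_left h2 h3
      _ ≤ 1 * D^2 := mul_le_mul_of_nonneg_right (hrle1 _ hp x hx) (by positivity)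
      _ = D^2 := one_mul _
  have habs4 : ∀ a b c d : ℝ, |a + b + c + d| ≤ |a| + |b| + |c| + |d| := by
    intro a b c d
    calc |a+b+c+d| ≤ |a+b+c| + |d| := abs_add_le _ _
      _ ≤ (|a+b| + |c|) + |d| := add_le_add (abs_add_le _ _) le_rfl
      _ ≤ ((|a| + |b|) + |c|) + |d| :=
          add_le_add (add_le_add (abs_add_le _ _) le_rfl) le_rfl
      _ = |a| + |b| + |c| + |d| := by ring
  -- continuity of rpow on Ioo
  have hcr : ∀ p : ℝ, ContinuousOn (fun y : ℝ => y ^ p) (Ioo (0:ℝ) 1) :=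
    fun p y hy => (Real.continuousAt_rpow_const y p (Or.inl (ne_of_gt hy.1))).continuousWithinAt
  -- integrability of g
  have hgc : ContinuousOn (ga c l α u) (Ioo (0:ℝ) 1) := by
    exact (((continuousOn_const.mul ((hcr (α-2)).mul (hu_cont.pow 2).continuousOn)).add
      (continuousOn_const.mul ((hcr (α/2-1)).mul (hu_cont.pow 2).continuousOn))).add
      (continuousOn_const.mul ((hcr (α-1)).mul (hu_cont.mul hd_cont).continuousOn))).add
      (continuousOn_const.mul ((hcr (α/2)).mul (hu_cont.mul hd_cont).continuousOn))
  have hgb : ∀ x ∈ Ioo (0:ℝ) 1, |ga c l α u x| ≤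
      (|c * (1-α)| + |l * (α/2)| + |(-2*c)| + |2*l|) * D^2 := by
    intro x hx
    have b1 := hm2 (α-2) (by linarith) x hx
    have b2 := hm2 (α/2-1) (by linarith) x hx
    have b3 := hm11 (α-1) (by linarith) x hx
    have b4 := hm11 (α/2) (by linarith) x hx
    have e1 : |c * (1-α) * (x^(α-2)*(u x)^2)| ≤ |c * (1-α)| * D^2 := by
      rw [abs_mul]; exact mul_le_mul_of_nonneg_left b1 (abs_nonneg _)
    have e2 : |l * (α/2) * (x^(α/2-1)*(u x)^2)| ≤ |l * (α/2)| * D^2 := by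
      rw [abs_mul]; exact mul_le_mul_of_nonneg_left b2 (abs_nonneg _)
    have e3 : |(-2*c) * (x^(α-1)*(u x * deriv u x))| ≤ |(-2*c)| * D^2 := by
      rw [abs_mul]; exact mul_le_mul_of_nonneg_left b3 (abs_nonneg _)
    have e4 : |(2*l) * (x^(α/2)*(u x * deriv u x))| ≤ |2*l| * D^2 := by
      rw [abs_mul]; exact mul_le_mul_of_nonneg_left b4 (abs_nonneg _)
    simp only [ga]
    refine (habs4 _ _ _ _).trans ?_
    have hrhs : (|c * (1-α)| + |l * (α/2)| + |(-2*c)| + |2*l|) * D^2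
        = |c * (1-α)| * D^2 + |l * (α/2)| * D^2 + |(-2*c)| * D^2 + |2*l| * D^2 := by ring
    rw [hrhs]
    exact add_le_add (add_le_add (add_le_add e1 e2) e3) e4
  have hg_int : IntegrableOn (ga c l α u) (Ioo (0:ℝ) 1) :=
    bdd_integrableOn _ hgc _ hgb
  -- integrability of S
  have hSc : ContinuousOn (Sa c l α u) (Ioo (0:ℝ) 1) := by
    exact ((((hcr (α/2)).mul hd_cont.continuousOn).sub
      (continuousOn_const.mul ((hcr (α/2-1)).mul hu_cont.continuousOn))).add
      (continuousOn_const.mul hu_cont.continuousOn)).pow 2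
  have hSb : ∀ x ∈ Ioo (0:ℝ) 1, |Sa c l α u x| ≤ (D + |c| * D + |l| * D)^2 := by
    intro x hx
    have b1 := hmd (α/2) (by linarith) x hx
    have b2 := hmu (α/2-1) (by linarith) x hx
    have b3 : |u x| ≤ D := by
      have := hulin x (Ioo_subset_Icc_self hx)
      nlinarith [hx.2, hx.1, hD0]
    have t2 : |c * (x^(α/2-1) * u x)| ≤ |c| * D := by
      rw [abs_mul]; exact mul_le_mul_of_nonneg_left b2 (abs_nonneg _)
    have t3 : |l * u x| ≤ |l| * D := by
      rw [abs_mul]; exact mul_le_mul_of_nonneg_left b3 (abs_nonneg _)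
    have hy : |x^(α/2) * deriv u x - c * (x^(α/2-1) * u x) + l * u x| ≤ D + |c| * D + |l| * D := by
      calc |x^(α/2) * deriv u x - c * (x^(α/2-1) * u x) + l * u x|
          ≤ |x^(α/2) * deriv u x - c * (x^(α/2-1) * u x)| + |l * u x| := abs_add_le _ _
        _ ≤ (|x^(α/2) * deriv u x| + |c * (x^(α/2-1) * u x)|) + |l * u x| :=
            add_le_add (abs_sub _ _) le_rfl
        _ ≤ (D + |c| * D) + |l| * D := add_le_add (add_le_add b1 t2) t3
        _ = D + |c| * D + |l| * D := by ring
    simp only [Sa]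
    rw [abs_of_nonneg (sq_nonneg _), ← sq_abs]
    exact pow_le_pow_left₀ (abs_nonneg _) hy 2
  have hS_int : IntegrableOn (Sa c l α u) (Ioo (0:ℝ) 1) :=
    bdd_integrableOn _ hSc _ hSb
  -- integrability of E
  have hE_int : IntegrableOn (Ea c l α u) (Ioo (0:ℝ) 1) := by
    refine IntegrableOn.congr_fun (hS_int.sub hg_int) (fun x hx => ?_) measurableSet_Ioo
    have := iden α u hx.1
    rw [← hc, ← hl] at this
    show Sa c l α u x - ga c l α u x = Ea c l α u x
    rw [this]; ring
  -- integrability of Q and u^2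
  have hrpow_ne : ∀ x ∈ Ioo (0:ℝ) 1, x ^ (2-α) ≠ 0 :=
    fun x hx => (Real.rpow_pos_of_pos hx.1 _).ne'
  have hdivrw : ∀ x ∈ Ioo (0:ℝ) 1,
      ((1 - α)^2/4) * (u x)^2 / x^(2-α) = (1-α)^2/4 * (x^(α-2)*(u x)^2) := by
    intro x hx
    rw [show (α-2:ℝ) = -(2-α) by ring, Real.rpow_neg hx.1.le, div_eq_mul_inv]
    ring
  have hQc : ContinuousOn (fun x : ℝ =>
      x ^ α * (deriv u x)^2 - ((1 - α)^2/4) * (u x)^2 / x ^ (2-α)) (Ioo (0:ℝ) 1) := by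
    exact ((hcr α).mul (hd_cont.pow 2).continuousOn).sub
      ((continuousOn_const.mul (hu_cont.pow 2).continuousOn).div (hcr (2-α)) hrpow_ne)
  have hQb : ∀ x ∈ Ioo (0:ℝ) 1,
      |x ^ α * (deriv u x)^2 - ((1 - α)^2/4) * (u x)^2 / x ^ (2-α)|
        ≤ D^2 + (1-α)^2/4 * D^2 := by
    intro x hx
    have b1 := hmdd α hα0 x hx
    have b2 := hm2 (α-2) (by linarith) x hx
    have e2 : |((1 - α)^2/4) * (u x)^2 / x^(2-α)| ≤ (1-α)^2/4 * D^2 := by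
      rw [hdivrw x hx, abs_mul, abs_of_nonneg (by positivity : (0:ℝ) ≤ (1-α)^2/4)]
      exact mul_le_mul_of_nonneg_left b2 (by positivity)
    calc |x ^ α * (deriv u x)^2 - ((1 - α)^2/4) * (u x)^2 / x ^ (2-α)|
        ≤ |x ^ α * (deriv u x)^2| + |((1 - α)^2/4) * (u x)^2 / x^(2-α)| := abs_sub _ _
      _ ≤ D^2 + (1-α)^2/4 * D^2 := add_le_add b1 e2
  have hQ_int : IntegrableOn (fun x : ℝ =>
      x ^ α * (deriv u x)^2 - ((1 - α)^2/4) * (u x)^2 / x ^ (2-α)) (Ioo (0:ℝ) 1) :=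
    bdd_integrableOn _ hQc _ hQb
  have hu2_int : IntegrableOn (fun x : ℝ => (u x)^2) (Ioo (0:ℝ) 1) := by
    refine bdd_integrableOn _ (hu_cont.pow 2).continuousOn (D^2) ?_
    intro x hx
    have b3 : |u x| ≤ D := by
      have := hulin x (Ioo_subset_Icc_self hx)
      nlinarith [hx.2, hx.1, hD0]
    rw [abs_of_nonneg (sq_nonneg _), ← sq_abs]
    exact pow_le_pow_left₀ (abs_nonneg _) b3 2
  -- FTC: integral of g is zero
  have hzero : ∫ x in Ioo (0:ℝ) 1, ga c l α u x = 0 := by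
    have tendsto_rpow0 : ∀ p : ℝ, 0 < p → Tendsto (fun x : ℝ => x^p) (𝓝[>] 0) (𝓝 0) := by
      intro p hp
      have h := (Real.continuousAt_rpow_const 0 p (Or.inr hp.le)).tendsto
      rw [Real.zero_rpow (ne_of_gt hp)] at h
      exact h.mono_left nhdsWithin_le_nhds
    have ht0 : Tendsto (Fa c l α u) (𝓝[>] (0:ℝ)) (𝓝 0) := by
      apply squeeze_zero_norm' (a := fun x => (|c| * D^2) * x^(α+1) + (l*D^2) * x^(α/2+2))
      · filter_upwards [Ioo_mem_nhdsGT_of_mem (left_mem_Ico.2 zero_lt_one)] with x hx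
        have h1 : |u x| ≤ D*x := hulin x (Ioo_subset_Icc_self hx)
        have hu2 : (u x)^2 ≤ D^2*x^2 := by
          have := pow_le_pow_left₀ (abs_nonneg (u x)) h1 2
          rw [sq_abs] at this; nlinarith [this]
        have hp1 : (0:ℝ) ≤ x^(α-1) := (Real.rpow_pos_of_pos hx.1 _).le
        have hp2 : (0:ℝ) ≤ x^(α/2) := (Real.rpow_pos_of_pos hx.1 _).le
        have key : |Fa c l α u x| ≤ (|c| * x^(α-1) + l * x^(α/2)) * (D^2 * x^2) := by
          simp only [Fa]
          rw [abs_mul]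
          apply mul_le_mul _ _ (abs_nonneg _)
            (add_nonneg (mul_nonneg (abs_nonneg _) hp1) (mul_nonneg hl0.le hp2))
          · calc |(-c) * x^(α-1) + l * x^(α/2)| ≤ |(-c) * x^(α-1)| + |l * x^(α/2)| := abs_add_le _ _
              _ ≤ |c| * x^(α-1) + l * x^(α/2) := by
                  rw [abs_mul, abs_mul, abs_neg, abs_of_nonneg hp1, abs_of_nonneg hp2]
                  have : |l| = l := abs_of_pos hl0
                  rw [this]
          · rw [abs_of_nonneg (sq_nonneg _)]; exact hu2
        rw [Real.norm_eq_abs]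
        refine key.trans ?_
        have hexp : (|c| * x^(α-1) + l * x^(α/2)) * (D^2 * x^2)
            = (|c| * D^2)*(x^(α-1)*x^2) + (l*D^2)*(x^(α/2)*x^2) := by ring
        rw [hexp, hradd2 (α-1) hx.1, hradd2 (α/2) hx.1, show α-1+2 = α+1 by ring]
      · have t1 := (tendsto_rpow0 (α+1) (by linarith)).const_mul (|c| * D^2)
        have t2 := (tendsto_rpow0 (α/2+2) (by linarith)).const_mul (l*D^2)
        simpa using t1.add t2
    have ht1 : Tendsto (Fa c l α u) (𝓝[<] (1:ℝ)) (𝓝 0) := by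
      have hc1 : ContinuousAt (Fa c l α u) 1 := by
        exact (((Real.continuousAt_rpow_const 1 (α-1) (Or.inl one_ne_zero)).const_mul (-c)).add
          ((Real.continuousAt_rpow_const 1 (α/2) (Or.inl one_ne_zero)).const_mul l)).mul
          ((hu_cont.pow 2).continuousAt)
      have hval : Fa c l α u 1 = 0 := by simp [Fa, hu1]
      have := hc1.tendsto.mono_left (nhdsWithin_le_nhds (s := Iio (1:ℝ)))
      rwa [hval] at this
    have hint : IntervalIntegrable (ga c l α u) volume 0 1 :=
      (intervalIntegrable_iff_integrableOn_Ioo_of_le zero_le_one).2 hg_int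
    have hderiv : ∀ x ∈ Ioo (0:ℝ) 1, HasDerivAt (Fa c l α u) (ga c l α u x) x := by
      intro x hx
      have := hasDeriv_Fa α u hu_diff (ne_of_gt hx.1)
      rwa [← hc, ← hl] at this
    have hFTC := intervalIntegral.integral_eq_sub_of_hasDerivAt_of_tendsto
      zero_lt_one hderiv hint ht0 ht1
    rw [intervalIntegral.integral_of_le zero_le_one, integral_Ioc_eq_integral_Ioo] at hFTC
    simpa using hFTC
  -- nonnegativity of ∫ S and the key identity
  have hSnn : 0 ≤ ∫ x in Ioo (0:ℝ) 1, Sa c l α u x :=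
    setIntegral_nonneg measurableSet_Ioo (fun x _ => by simp only [Sa]; positivity)
  have hSeq : ∫ x in Ioo (0:ℝ) 1, Sa c l α u x
      = (∫ x in Ioo (0:ℝ) 1, ga c l α u x) + ∫ x in Ioo (0:ℝ) 1, Ea c l α u x := by
    rw [← integral_add hg_int hE_int]
    refine setIntegral_congr_fun measurableSet_Ioo (fun x hx => ?_)
    have := iden α u hx.1
    rwa [← hc, ← hl] at this
  have hEnn : 0 ≤ ∫ x in Ioo (0:ℝ) 1, Ea c l α u x := by
    rw [hSeq, hzero, zero_add] at hSnn; exact hSnn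
  -- pointwise comparison E ≤ Q + k u^2
  have hmono : ∫ x in Ioo (0:ℝ) 1, Ea c l α u x
      ≤ ∫ x in Ioo (0:ℝ) 1, ((x ^ α * (deriv u x)^2 - ((1 - α)^2/4) * (u x)^2 / x ^ (2-α))
          + (l^2 - l*(2-α)/2) * (u x)^2) := by
    refine setIntegral_mono_on hE_int (hQ_int.add (hu2_int.const_mul _)) measurableSet_Ioo ?_
    intro x hx
    have h1x : 1 ≤ x^(α/2-1) :=
      Real.one_le_rpow_of_pos_of_le_one_of_nonpos hx.1 hx.2.le (by linarith)
    have hcoef : 0 ≤ l*(2-α)/2 := by positivity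
    have hstep : (l*(2-α)/2) * (u x)^2 ≤ (l*(2-α)/2) * (x^(α/2-1)*(u x)^2) := by
      apply mul_le_mul_of_nonneg_left _ hcoef
      exact le_mul_of_one_le_left (sq_nonneg _) h1x
    simp only [Ea]
    rw [hdivrw x hx]
    nlinarith [hstep]
  have hsplit : ∫ x in Ioo (0:ℝ) 1, ((x ^ α * (deriv u x)^2
        - ((1 - α)^2/4) * (u x)^2 / x ^ (2-α)) + (l^2 - l*(2-α)/2) * (u x)^2)
      = (∫ x in Ioo (0:ℝ) 1, (x ^ α * (deriv u x)^2 - ((1 - α)^2/4) * (u x)^2 / x ^ (2-α)))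
        + (l^2 - l*(2-α)/2) * ∫ x in Ioo (0:ℝ) 1, (u x)^2 := by
    rw [integral_add hQ_int (hu2_int.const_mul _), MeasureTheory.integral_const_mul]
  have hk : l^2 - l*(2-α)/2 = -((2-α)^2/16) := by rw [hl]; ring
  set A := ∫ x in Ioo (0:ℝ) 1, (u x)^2 with hA
  set B := ∫ x in Ioo (0:ℝ) 1,
    (x ^ α * (deriv u x)^2 - ((1 - α)^2/4) * (u x)^2 / x ^ (2-α)) with hB
  have hfinal : (2-α)^2/16 * A ≤ B := by
    rw [hsplit, hk] at hmono
    linarith [hEnn.trans hmono]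
  have h2ne : (2:ℝ) - α ≠ 0 := ne_of_gt h2α
  calc A = 16/(2-α)^2 * ((2-α)^2/16 * A) := by field_simp
    _ ≤ 16/(2-α)^2 * B := by
        apply mul_le_mul_of_nonneg_left hfinal (div_nonneg (by norm_num) (sq_nonneg _))
end

section
/- For all α ∈ [0,1) and all u ∈ C_c^∞(0,1), ∫₀¹ x² u'(x)² dx ≤ ∫₀¹ (x^α u'(x)² − μ(α) u(x)²/x^{2-α}) dx, where μ(α) = (1-α)²/4. -/
open Set MeasureTheory

private lemma quad_nonneg {w g m p q : ℝ} (hw : 0 ≤ w) (hm : 0 ≤ m)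
    (hd : g ^ 2 ≤ 4 * (w * m)) : 0 ≤ w * p ^ 2 + g * (p * q) + m * q ^ 2 := by
  rcases eq_or_lt_of_le hw with h | h
  · have hg : g = 0 := by nlinarith [sq_nonneg g]
    subst hg
    simp only [zero_mul, add_zero, zero_add]
    nlinarith [mul_nonneg hm (sq_nonneg q), sq_nonneg p]
  · nlinarith [sq_nonneg (2 * w * p + g * q), mul_nonneg (sub_nonneg.2 hd) (sq_nonneg q)]

private lemma bound_aux (a t y r p c : ℝ) (ha0 : 0 ≤ a) (ha1 : a ≤ 1)
    (ht0 : 0 ≤ t) (ht1 : t ≤ 1) (hy0 : 0 ≤ y) (hyt : y ≤ t)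
    (hr : r ^ 2 ≤ c ^ 2) (hp : p ^ 2 ≤ c ^ 2) :
    |(1 - a) / 2 * (((a - 1) * t - y) * r ^ 2 + (t - y) * (2 * r * p))| ≤ 3 * c ^ 2 := by
  have h1a : (0:ℝ) ≤ 1 - a := by linarith
  have hr0 : 0 ≤ r ^ 2 := sq_nonneg r
  have hp0 : 0 ≤ p ^ 2 := sq_nonneg p
  have hc0 : 0 ≤ c ^ 2 := by nlinarith
  have hS1 : (0:ℝ) ≤ 1 - (1 - a) * (t - y) := by
    nlinarith [mul_nonneg ha0 (sub_nonneg.2 hyt)]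
  have hS2 : (0:ℝ) ≤ 2 - (1 - a) * ((1 - a) * t + y) := by
    nlinarith [mul_nonneg (mul_nonneg h1a h1a) (sub_nonneg.2 ht1),
      mul_nonneg h1a ha0, mul_nonneg ha0 hy0]
  have hQ : 0 ≤ (1 - (1 - a) * (t - y)) * (r ^ 2 + p ^ 2) :=
    mul_nonneg hS1 (by linarith)
  have hQ2 : 0 ≤ (2 - (1 - a) * ((1 - a) * t + y)) * r ^ 2 := mul_nonneg hS2 hr0
  have hcr1 : 0 ≤ (t - y) * (r + p) ^ 2 := mul_nonneg (by linarith) (sq_nonneg _)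
  have hcr2 : 0 ≤ (t - y) * (r - p) ^ 2 := mul_nonneg (by linarith) (sq_nonneg _)
  rw [abs_le]
  constructor
  · nlinarith [mul_nonneg h1a hcr2,
      mul_nonneg h1a (mul_nonneg (mul_nonneg h1a ht0) hr0),
      mul_nonneg h1a (mul_nonneg hy0 hr0), hQ]
  · nlinarith [mul_nonneg h1a hcr1, mul_nonneg h1a hcr2, hQ2, hQ,
      mul_nonneg h1a (mul_nonneg (mul_nonneg h1a ht0) hr0),
      mul_nonneg h1a (mul_nonneg hy0 hr0)]

set_option maxHeartbeats 1000000 in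
theorem hardy_type_inequality_weakly_degenerate
    (α : ℝ) (hα : α ∈ Set.Ico (0:ℝ) 1)
    (u : ℝ → ℝ) (hu : ContDiff ℝ (⊤ : ℕ∞) u)
    (hsupp : ∀ x : ℝ, x ∉ Set.Ioo (0:ℝ) 1 → u x = 0) :
    ∫ x in Set.Ioo (0:ℝ) 1, x ^ (2:ℝ) * (deriv u x)^2 ≤
      ∫ x in Set.Ioo (0:ℝ) 1,
        (x ^ α * (deriv u x)^2 - ((1 - α)^2 / 4) * (u x)^2 / x ^ (2 - α)) := by
  obtain ⟨hα0, hα1⟩ := hα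
  have h1α : (0:ℝ) ≤ 1 - α := by linarith
  have hucont : Continuous u := hu.continuous
  have hdiff : Differentiable ℝ u := hu.differentiable (by simp)
  have hu' : Continuous (deriv u) := hu.continuous_deriv (by simp)
  have hsupp' : Function.support u ⊆ Set.Ioo (0:ℝ) 1 :=
    Function.support_subset_iff'.2 hsupp
  have hcs : HasCompactSupport u := by
    refine IsCompact.of_isClosed_subset (isCompact_Icc (a := (0:ℝ)) (b := 1))
      isClosed_closure ?_
    calc tsupport u ⊆ closure (Set.Ioo (0:ℝ) 1) := closure_mono hsupp'
      _ = Set.Icc (0:ℝ) 1 := closure_Ioo (by norm_num)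
  have hu0 : u 0 = 0 := hsupp 0 (by simp)
  obtain ⟨C, hC⟩ := (hcs.deriv).exists_bound_of_continuous hu'
  have hC0 : 0 ≤ C := le_trans (norm_nonneg _) (hC 0)
  have hCa : ∀ x : ℝ, |deriv u x| ≤ C := fun x => hC x
  have hp2 : ∀ x : ℝ, (deriv u x) ^ 2 ≤ C ^ 2 := by
    intro x
    nlinarith [hCa x, abs_nonneg (deriv u x), le_abs_self (deriv u x),
      neg_abs_le (deriv u x)]
  have hLip : ∀ x : ℝ, |u x| ≤ C * |x| := by
    intro x
    have := Convex.norm_image_sub_le_of_norm_deriv_le (s := (Set.univ : Set ℝ))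
      (fun y _ => hdiff y) (fun y _ => hC y) convex_univ (Set.mem_univ 0) (Set.mem_univ x)
    simpa [hu0, Real.norm_eq_abs] using this
  set μα : ℝ := (1 - α) ^ 2 / 4 with hμα
  set L : ℝ → ℝ := fun x => x ^ (2:ℝ) * (deriv u x) ^ 2 with hL
  set R : ℝ → ℝ := fun x => x ^ α * (deriv u x) ^ 2 - μα * (u x) ^ 2 / x ^ (2 - α) with hR
  set G : ℝ → ℝ := fun x => ((1 - α) / 2) * ((x ^ (α - 1) - x) * (u x) ^ 2) with hG
  set G' : ℝ → ℝ := fun x => ((1 - α) / 2) *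
      (((α - 1) * x ^ (α - 2) - 1) * (u x) ^ 2 +
        (x ^ (α - 1) - x) * (2 * u x * deriv u x)) with hG'
  have e2 : ∀ x : ℝ, x ^ (2:ℝ) = x ^ 2 := fun x => by
    rw [show (2:ℝ) = ((2:ℕ):ℝ) by norm_num, Real.rpow_natCast]
  -- basic facts on Ioo
  have hfacts : ∀ x ∈ Set.Ioo (0:ℝ) 1,
      0 < x ^ α ∧ x ^ α ≤ 1 ∧ x ^ 2 ≤ x ^ α ∧
        x ^ (α - 1) = x ^ α / x ∧ x ^ (α - 2) = x ^ α / x ^ 2 ∧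
        x ^ (2 - α) = x ^ 2 / x ^ α := by
    rintro x ⟨hx, hx1⟩
    refine ⟨Real.rpow_pos_of_pos hx α, Real.rpow_le_one hx.le hx1.le hα0, ?_, ?_, ?_, ?_⟩
    · rw [← e2 x]; exact Real.rpow_le_rpow_of_exponent_ge hx hx1.le (by linarith)
    · rw [Real.rpow_sub hx, Real.rpow_one]
    · rw [Real.rpow_sub hx, e2]
    · rw [Real.rpow_sub hx, e2]
  -- pointwise inequality
  have key : ∀ x ∈ Set.Ioo (0:ℝ) 1, 0 ≤ R x - L x - G' x := by
    intro x hxm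
    obtain ⟨hx, hx1⟩ := hxm
    obtain ⟨ht0, ht1, htx, e1, e0, e3⟩ := hfacts x ⟨hx, hx1⟩
    have hkey : R x - L x - G' x =
        (x ^ α - x ^ 2) * (deriv u x) ^ 2 +
          ((1 - α) * (x - x ^ α / x)) * (deriv u x * u x) +
          ((1 - α) / 2 + μα * (x ^ α / x ^ 2)) * (u x) ^ 2 := by
      simp only [hR, hL, hG', e1, e0, e3, e2, hμα]
      field_simp
      ring
    rw [hkey]
    refine quad_nonneg (by linarith) ?_ ?_
    · have h2 : 0 ≤ μα * (x ^ α / x ^ 2) := by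
        apply mul_nonneg (by positivity) (by positivity)
      linarith
    · have hid : 4 * ((x ^ α - x ^ 2) * ((1 - α) / 2 + μα * (x ^ α / x ^ 2))) -
          ((1 - α) * (x - x ^ α / x)) ^ 2 = (1 - α) * (3 - α) * (x ^ α - x ^ 2) := by
        simp only [hμα]
        field_simp
        ring
      nlinarith [mul_nonneg (mul_nonneg h1α (by linarith : (0:ℝ) ≤ 3 - α))
        (by linarith : (0:ℝ) ≤ x ^ α - x ^ 2)]
  -- measurability / continuity on Ioo
  have hrc : ∀ c : ℝ, ContinuousOn (fun y : ℝ => y ^ c) (Set.Ioo (0:ℝ) 1) :=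
    fun c x hx => (Real.continuousAt_rpow_const x c (Or.inl (ne_of_gt hx.1))).continuousWithinAt
  have hcL : ContinuousOn L (Set.Ioo (0:ℝ) 1) := by
    rw [hL]; exact (hrc 2).mul ((hu'.continuousOn).pow 2)
  have hcR : ContinuousOn R (Set.Ioo (0:ℝ) 1) := by
    rw [hR]
    refine ContinuousOn.sub ((hrc α).mul ((hu'.continuousOn).pow 2)) ?_
    refine ContinuousOn.div (continuousOn_const.mul ((hucont.continuousOn).pow 2))
      (hrc (2 - α)) ?_
    exact fun x hx => (Real.rpow_pos_of_pos hx.1 _).ne'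
  have hcG' : ContinuousOn G' (Set.Ioo (0:ℝ) 1) := by
    rw [hG']
    refine continuousOn_const.mul (ContinuousOn.add ?_ ?_)
    · exact ((continuousOn_const.mul (hrc (α - 2))).sub continuousOn_const).mul
        ((hucont.continuousOn).pow 2)
    · exact ((hrc (α - 1)).sub continuousOn_id).mul
        ((continuousOn_const.mul hucont.continuousOn).mul hu'.continuousOn)
  have hIntAux : ∀ (f : ℝ → ℝ) (M : ℝ), ContinuousOn f (Set.Ioo (0:ℝ) 1) →
      (∀ x ∈ Set.Ioo (0:ℝ) 1, ‖f x‖ ≤ M) → IntegrableOn f (Set.Ioo (0:ℝ) 1) volume := by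
    intro f M hc hb
    refine Integrable.mono' (integrable_const M)
      (hc.aestronglyMeasurable measurableSet_Ioo) ?_
    exact (ae_restrict_iff' measurableSet_Ioo).2 (Filter.Eventually.of_forall hb)
  have hμ0 : 0 ≤ μα := by positivity
  have hμ1 : μα ≤ 1 := by rw [hμα]; nlinarith
  have hr2 : ∀ x ∈ Set.Ioo (0:ℝ) 1, (u x / x) ^ 2 ≤ C ^ 2 := by
    rintro x ⟨hx, hx1⟩
    have h1 : |u x| ≤ C * x := by simpa [abs_of_pos hx] using hLip x
    have h2 : |u x / x| ≤ C := by
      rw [abs_div, abs_of_pos hx, div_le_iff₀ hx]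
      exact h1
    nlinarith [abs_nonneg (u x / x), le_abs_self (u x / x), neg_abs_le (u x / x)]
  -- integrability
  have hIL : IntegrableOn L (Set.Ioo (0:ℝ) 1) volume := by
    refine hIntAux L (C ^ 2) hcL ?_
    rintro x ⟨hx, hx1⟩
    rw [Real.norm_eq_abs, hL]
    simp only [e2 x]
    rw [abs_of_nonneg (by positivity)]
    nlinarith [hp2 x, mul_nonneg (by nlinarith : (0:ℝ) ≤ 1 - x ^ 2) (sq_nonneg (deriv u x))]
  have hIR : IntegrableOn R (Set.Ioo (0:ℝ) 1) volume := by
    refine hIntAux R (2 * C ^ 2) hcR ?_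
    rintro x ⟨hx, hx1⟩
    obtain ⟨ht0, ht1, htx, e1, e0, e3⟩ := hfacts x ⟨hx, hx1⟩
    have hr := hr2 x ⟨hx, hx1⟩
    have hRx : R x = x ^ α * (deriv u x) ^ 2 - μα * ((u x / x) ^ 2 * x ^ α) := by
      simp only [hR]; rw [e3]; field_simp
    rw [Real.norm_eq_abs, hRx, abs_le]
    constructor
    · nlinarith [hp2 x, sq_nonneg (deriv u x), sq_nonneg (u x / x),
        mul_nonneg (sub_nonneg.2 hr) ht0.le, mul_nonneg (sq_nonneg (u x / x)) ht0.le]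
    · nlinarith [hp2 x, sq_nonneg (deriv u x), sq_nonneg (u x / x),
        mul_nonneg (sub_nonneg.2 (hp2 x)) ht0.le,
        mul_nonneg (sub_nonneg.2 hr) ht0.le,
        mul_nonneg (sq_nonneg (u x / x)) ht0.le]
  have hIG' : IntegrableOn G' (Set.Ioo (0:ℝ) 1) volume := by
    refine hIntAux G' (3 * C ^ 2) hcG' ?_
    rintro x ⟨hx, hx1⟩
    obtain ⟨ht0, ht1, htx, e1, e0, e3⟩ := hfacts x ⟨hx, hx1⟩
    have hr := hr2 x ⟨hx, hx1⟩
    have hp := hp2 x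
    have hGx : G' x = ((1 - α) / 2) *
        (((α - 1) * x ^ α - x ^ 2) * (u x / x) ^ 2 +
          (x ^ α - x ^ 2) * (2 * (u x / x) * deriv u x)) := by
      simp only [hG']; rw [e1, e0]; field_simp
      try ring
      try ring_nf
      try tauto
    rw [Real.norm_eq_abs, hGx]
    exact bound_aux α (x ^ α) (x ^ 2) (u x / x) (deriv u x) C hα0 hα1.le
      ht0.le ht1 (by positivity) htx hr hp
  -- FTC for G
  have hGcont : ContinuousOn G (Set.Icc (0:ℝ) 1) := by
    intro x hx
    rcases eq_or_lt_of_le hx.1 with h0 | h0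
    · -- x = 0
      subst h0
      have hG0 : G 0 = 0 := by
        rw [hG]; simp [hu0]
      rw [ContinuousWithinAt, hG0]
      apply squeeze_zero_norm' (a := fun y => C ^ 2 * y ^ (α + 1))
      · filter_upwards [self_mem_nhdsWithin] with y hy
        obtain ⟨hy0, hy1⟩ := hy
        rcases eq_or_lt_of_le hy0 with h | h
        · subst h
          rw [hG]
          simp [hu0]
          positivity
        · have hq : (u y) ^ 2 ≤ C ^ 2 * y ^ 2 := by
            have := hLip y
            rw [abs_of_pos h] at this
            nlinarith [abs_nonneg (u y), le_abs_self (u y), neg_abs_le (u y)]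
          have hyr : 0 < y ^ (α - 1) := Real.rpow_pos_of_pos h _
          have hya : 0 < y ^ (α + 1) := Real.rpow_pos_of_pos h _
          have hmul : y ^ (α - 1) * y ^ 2 = y ^ (α + 1) := by
            rw [← e2 y, ← Real.rpow_add h, show α - 1 + 2 = α + 1 by ring]
          have hy3 : y ^ 3 ≤ y ^ (α + 1) := by
            have : y ^ (3:ℝ) ≤ y ^ (α + 1) :=
              Real.rpow_le_rpow_of_exponent_ge h hy1 (by linarith)
            rwa [show (3:ℝ) = ((3:ℕ):ℝ) by norm_num, Real.rpow_natCast] at this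
          rw [hG, Real.norm_eq_abs]
          simp only
          rw [abs_mul, abs_mul, abs_of_nonneg (by positivity : (0:ℝ) ≤ (1 - α) / 2),
            abs_of_nonneg (sq_nonneg (u y))]
          have habs : |y ^ (α - 1) - y| ≤ y ^ (α - 1) + y := by
            rw [abs_le]; constructor <;> nlinarith
          calc (1 - α) / 2 * (|y ^ (α - 1) - y| * u y ^ 2)
              ≤ 1 / 2 * ((y ^ (α - 1) + y) * (C ^ 2 * y ^ 2)) := by
                apply mul_le_mul (by linarith) ?_ (by positivity) (by norm_num)
                apply mul_le_mul habs hq (sq_nonneg _) (by positivity)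
            _ = (C ^ 2 / 2) * (y ^ (α - 1) * y ^ 2 + y ^ 3) := by ring
            _ = (C ^ 2 / 2) * (y ^ (α + 1) + y ^ 3) := by rw [hmul]
            _ ≤ C ^ 2 * y ^ (α + 1) := by nlinarith
      · have t1 : ContinuousWithinAt (fun y : ℝ => C ^ 2 * y ^ (α + 1)) (Set.Icc 0 1) 0 :=
          continuousWithinAt_const.mul
            (Real.continuousAt_rpow_const 0 (α + 1) (Or.inr (by linarith))).continuousWithinAt
        have t2 : Filter.Tendsto (fun y : ℝ => C ^ 2 * y ^ (α + 1))
            (nhdsWithin 0 (Set.Icc 0 1)) (nhds ((fun y : ℝ => C ^ 2 * y ^ (α + 1)) 0)) := t1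
        simp only [Real.zero_rpow (show α + 1 ≠ 0 by positivity), mul_zero] at t2
        exact t2
    · -- x > 0
      apply ContinuousAt.continuousWithinAt
      rw [hG]
      apply ContinuousAt.mul continuousAt_const
      apply ContinuousAt.mul
      · exact (Real.continuousAt_rpow_const x (α - 1) (Or.inl h0.ne')).sub continuousAt_id
      · exact (hucont.continuousAt).pow 2
  have hGderiv : ∀ x ∈ Set.Ioo (0:ℝ) 1, HasDerivAt G (G' x) x := by
    rintro x ⟨hx, hx1⟩
    have h1 : HasDerivAt (fun y : ℝ => y ^ (α - 1)) ((α - 1) * x ^ (α - 1 - 1)) x :=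
      Real.hasDerivAt_rpow_const (Or.inl hx.ne')
    have h2 : HasDerivAt (fun y : ℝ => y ^ (α - 1) - y) ((α - 1) * x ^ (α - 1 - 1) - 1) x :=
      h1.sub (hasDerivAt_id x)
    have h3 : HasDerivAt (fun y : ℝ => (u y) ^ 2) (2 * u x * deriv u x) x := by
      have := ((hdiff x).hasDerivAt).fun_pow 2
      simpa using this
    have h4 := (h2.mul h3).const_mul ((1 - α) / 2)
    have : α - 1 - 1 = α - 2 := by ring
    rw [this] at h4
    exact h4
  have hIIG' : IntervalIntegrable G' volume 0 1 :=
    (intervalIntegrable_iff_integrableOn_Ioo_of_le (by norm_num)).2 hIG'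
  have hFTC : ∫ x in (0:ℝ)..1, G' x = G 1 - G 0 :=
    intervalIntegral.integral_eq_sub_of_hasDeriv_right_of_le (by norm_num) hGcont
      (fun x hx => (hGderiv x hx).hasDerivWithinAt) hIIG'
  have hG1 : G 1 = 0 := by rw [hG]; simp
  have hG0 : G 0 = 0 := by rw [hG]; simp [hu0]
  have hzero : ∫ x in Set.Ioo (0:ℝ) 1, G' x = 0 := by
    rw [intervalIntegral.integral_of_le (by norm_num : (0:ℝ) ≤ 1),
      integral_Ioc_eq_integral_Ioo] at hFTC
    rw [hFTC, hG1, hG0, sub_zero]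
  -- combine
  have hpos : 0 ≤ ∫ x in Set.Ioo (0:ℝ) 1, (R x - L x - G' x) :=
    setIntegral_nonneg measurableSet_Ioo key
  have hsplit1 : ∫ x in Set.Ioo (0:ℝ) 1, (R x - L x - G' x) =
      (∫ x in Set.Ioo (0:ℝ) 1, (R x - L x)) - ∫ x in Set.Ioo (0:ℝ) 1, G' x :=
    integral_sub (hIR.sub hIL) hIG'
  have hsplit2 : ∫ x in Set.Ioo (0:ℝ) 1, (R x - L x) =
      (∫ x in Set.Ioo (0:ℝ) 1, R x) - ∫ x in Set.Ioo (0:ℝ) 1, L x :=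
    integral_sub hIR hIL
  rw [hsplit1, hsplit2, hzero, sub_zero] at hpos
  show (∫ x in Set.Ioo (0:ℝ) 1, L x) ≤ ∫ x in Set.Ioo (0:ℝ) 1, R x
  linarith
end

section
/- For all α ∈ [1,2) and all u ∈ C_c^∞(0,1), ∫₀¹ x² u'(x)² dx ≤ C'_α ∫₀¹ (x^α u'(x)² − μ(α) u(x)²/x^{2-α}) dx, where C'_α = 1 + 4(1-α)(α-3)/(2-α)² and μ(α) = (1-α)²/4. -/
open Set MeasureTheory

/-- Auxiliary polynomial expression: `x*(2-α)²` times the pointwise slack in the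
Hardy-type inequality, written with `β = α-1` and `X = x^β` as free variables. -/
noncomputable def Gexpr (β x X w v : ℝ) : ℝ :=
  ((1-β)^2 + 4*β*(2-β))*(x^2*X*v^2 - β^2/4*X*w^2)
  + ((((1-β)^2 + 4*β*(2-β))*β/2)*β*X + (-(β*(1-β)^2/2) + 2*β*(2-β)*(1-β))*x)*w^2
  + 2*x*((((1-β)^2 + 4*β*(2-β))*β/2)*X + (-(β*(1-β)^2/2) + 2*β*(2-β)*(1-β))*x)*w*v
  - (1-β)^2*x^3*v^2

lemma Gexpr_nonneg (β x X w v : ℝ) (hβ0 : 0 ≤ β) (hβ1 : β < 1)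
    (hx0 : 0 < x) (hxX : x ≤ X) (hX1 : X ≤ 1) : 0 ≤ Gexpr β x X w v := by
  have hX0 : 0 < X := hx0.trans_le hxX
  have hid : 16*X*Gexpr β x X w v
      = 16*X*(X-x)*(1-β)^2*(x*v+β/2*w)^2
        + (β*(2-β)/4)*(16*x*X*v+8*(β*X+(1-β)*x)*w)^2
        + 16*(β*(2-β)/4)*x*(7*X-4*x)*(1-β)^2*w^2 := by
    simp only [Gexpr]; ring
  have hK : (0:ℝ) ≤ β*(2-β)/4 :=
    div_nonneg (mul_nonneg hβ0 (by linarith)) (by norm_num)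
  have t1 : (0:ℝ) ≤ 16*X*(X-x)*(1-β)^2*(x*v+β/2*w)^2 :=
    mul_nonneg (mul_nonneg (mul_nonneg (by linarith) (by linarith)) (sq_nonneg _)) (sq_nonneg _)
  have t2 : (0:ℝ) ≤ (β*(2-β)/4)*(16*x*X*v+8*(β*X+(1-β)*x)*w)^2 :=
    mul_nonneg hK (sq_nonneg _)
  have t3 : (0:ℝ) ≤ 16*(β*(2-β)/4)*x*(7*X-4*x)*(1-β)^2*w^2 :=
    mul_nonneg (mul_nonneg (mul_nonneg (mul_nonneg (by linarith) hx0.le) (by linarith))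
      (sq_nonneg _)) (sq_nonneg _)
  have h3 : 0 ≤ 16*X*Gexpr β x X w v := by rw [hid]; linarith
  nlinarith [h3, hX0]

set_option maxHeartbeats 1000000 in
theorem hardy_type_inequality_strongly_degenerate
    (α : ℝ) (hα : α ∈ Set.Ico (1:ℝ) 2)
    (u : ℝ → ℝ) (hu : ContDiff ℝ (⊤ : ℕ∞) u)
    (hsupp : ∀ x : ℝ, x ∉ Set.Ioo (0:ℝ) 1 → u x = 0) :
    ∫ x in Set.Ioo (0:ℝ) 1, x ^ (2:ℝ) * (deriv u x)^2 ≤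
      (1 + 4 * (1 - α) * (α - 3) / (2 - α)^2) *
        ∫ x in Set.Ioo (0:ℝ) 1,
          (x ^ α * (deriv u x)^2 - ((1 - α)^2 / 4) * (u x)^2 / x ^ (2 - α)) := by
  obtain ⟨hα1, hα2⟩ := hα
  have hu_cont : Continuous u := hu.continuous
  have hud : Differentiable ℝ u := hu.differentiable (by simp)
  have hv_cont : Continuous (deriv u) := hu.continuous_deriv (by simp)
  have u0 : u 0 = 0 := hsupp 0 (by simp)
  have u1 : u 1 = 0 := hsupp 1 (by simp)
  have hsub : Ioo (0:ℝ) 1 ⊆ Set.uIoc (0:ℝ) 1 := by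
    rw [uIoc_of_le zero_le_one]; exact Ioo_subset_Ioc_self
  have hint1 : IntegrableOn (fun x => x ^ (2:ℝ) * (deriv u x)^2) (Ioo (0:ℝ) 1) := by
    apply (ContinuousOn.integrableOn_Icc ?_).mono_set Ioo_subset_Icc_self
    have hc : ContinuousOn (fun x : ℝ => x ^ (2:ℝ)) (Icc (0:ℝ) 1) :=
      fun x _ => (Real.continuousAt_rpow_const x 2 (Or.inr (by norm_num))).continuousWithinAt
    exact hc.mul ((hv_cont.pow 2).continuousOn)
  rcases eq_or_lt_of_le hα1 with h1 | h1
  · -- case α = 1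
    subst h1
    rw [show (1 + 4*(1-(1:ℝ))*((1:ℝ)-3)/(2-(1:ℝ))^2 : ℝ) = 1 by norm_num, one_mul]
    have hRb : IntegrableOn (fun x : ℝ => ((1-(1:ℝ))^2/4) * (u x)^2 / x ^ ((2:ℝ)-1)) (Ioo (0:ℝ) 1) :=
      integrableOn_zero.congr_fun (fun x _ => by norm_num) measurableSet_Ioo
    have hRa : IntegrableOn (fun x : ℝ => x ^ (1:ℝ) * (deriv u x)^2) (Ioo (0:ℝ) 1) := by
      apply (ContinuousOn.integrableOn_Icc ?_).mono_set Ioo_subset_Icc_self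
      have hc : ContinuousOn (fun x : ℝ => x ^ (1:ℝ)) (Icc (0:ℝ) 1) :=
        fun x _ => (Real.continuousAt_rpow_const x 1 (Or.inr (by norm_num))).continuousWithinAt
      exact hc.mul ((hv_cont.pow 2).continuousOn)
    have hR : IntegrableOn
        (fun x : ℝ => x ^ (1:ℝ) * (deriv u x)^2 - ((1-(1:ℝ))^2/4) * (u x)^2 / x ^ ((2:ℝ)-1))
        (Ioo (0:ℝ) 1) := hRa.sub hRb
    apply setIntegral_mono_on hint1 hR measurableSet_Ioo
    intro x hx
    have h2 : x ^ (2:ℝ) ≤ x ^ (1:ℝ) :=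
      Real.rpow_le_rpow_of_exponent_ge hx.1 hx.2.le one_le_two
    have hz : ((1-(1:ℝ))^2/4) * (u x)^2 / x ^ ((2:ℝ)-1) = 0 := by norm_num
    rw [hz, sub_zero]
    exact mul_le_mul_of_nonneg_right h2 (sq_nonneg _)
  · -- case 1 < α
    have hβ0 : (0:ℝ) < α - 1 := by linarith
    have hβ1 : α - 1 < 1 := by linarith
    have h2α : (0:ℝ) < 2 - α := by linarith
    set A := (1 + 4*(1-α)*(α-3)/(2-α)^2)*(α-1)/2 with hA
    set B := -(α-1)/2 + 2*(α-1)*(3-α)/(2-α) with hB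
    set ψ : ℝ → ℝ := fun x => x ^ (α-2) * (A*(α-1)*(u x)^2)
      + (B*(u x)^2 + (A*x^(α-1) + B*x)*(2*(u x)*(deriv u x))) with hψ
    have hXcont : ContinuousOn (fun y : ℝ => y ^ (α-1)) (Icc (0:ℝ) 1) :=
      fun y _ => (Real.continuousAt_rpow_const y (α-1) (Or.inr (by linarith))).continuousWithinAt
    -- FTC for ψ
    have hψII : IntervalIntegrable ψ volume 0 1 := by
      rw [hψ]
      apply IntervalIntegrable.add
      · exact (intervalIntegral.intervalIntegrable_rpow' (by linarith)).mul_continuousOn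
          ((continuous_const.mul (hu_cont.pow 2)).continuousOn)
      · apply ContinuousOn.intervalIntegrable
        rw [uIcc_of_le zero_le_one]
        exact ((continuous_const.mul (hu_cont.pow 2)).continuousOn).add
          (((continuousOn_const.mul hXcont).add
            ((continuous_const.mul continuous_id).continuousOn)).mul
            (((continuous_const.mul hu_cont).mul hv_cont).continuousOn))
    have hFcont : ContinuousOn (fun y : ℝ => (A*y^(α-1) + B*y)*(u y)^2) (Icc (0:ℝ) 1) :=
      ((continuousOn_const.mul hXcont).add
        ((continuous_const.mul continuous_id).continuousOn)).mul ((hu_cont.pow 2).continuousOn)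
    have hFd : ∀ x ∈ Ioo (0:ℝ) 1,
        HasDerivAt (fun y : ℝ => (A*y^(α-1) + B*y)*(u y)^2) (ψ x) x := by
      intro x hx
      have hx0 : (0:ℝ) < x := hx.1
      have hrp : HasDerivAt (fun y : ℝ => y ^ (α-1)) ((α-1) * x ^ (α-1-1)) x :=
        Real.hasDerivAt_rpow_const (Or.inl hx0.ne')
      have hid : HasDerivAt (fun y : ℝ => B*y) B x := by
        simpa using (hasDerivAt_id x).const_mul B
      have hφ : HasDerivAt (fun y : ℝ => A*y^(α-1) + B*y) (A*((α-1) * x^(α-1-1)) + B) x :=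
        (hrp.const_mul A).add hid
      have hu2 : HasDerivAt (fun y : ℝ => (u y)^2) (2*(u x)*(deriv u x)) x := by
        simpa using ((hud x).hasDerivAt.fun_pow 2)
      have h := hφ.mul hu2
      have h2 : (A*((α-1) * x^(α-1-1)) + B)*(u x)^2
          + (A*x^(α-1) + B*x)*(2*(u x)*(deriv u x)) = ψ x := by
        simp only [hψ]
        rw [show α-1-1 = α-2 by ring]
        ring
      exact h2 ▸ h
    have hFTC : ∫ x in (0:ℝ)..1, ψ x = 0 := by
      rw [intervalIntegral.integral_eq_sub_of_hasDeriv_right_of_le zero_le_one hFcont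
        (fun x hx => (hFd x hx).hasDerivWithinAt) hψII, u0, u1]
      ring
    have hψIoo0 : ∫ x in Ioo (0:ℝ) 1, ψ x = 0 := by
      rw [← MeasureTheory.integral_Ioc_eq_integral_Ioo, ← intervalIntegral.integral_of_le zero_le_one]
      exact hFTC
    have hψint : IntegrableOn ψ (Ioo (0:ℝ) 1) :=
      (intervalIntegrable_iff.mp hψII).mono_set hsub
    -- integrability of the right-hand integrand
    have ha : IntegrableOn (fun x : ℝ => x ^ α * (deriv u x)^2) (Ioo (0:ℝ) 1) := by
      apply (ContinuousOn.integrableOn_Icc ?_).mono_set Ioo_subset_Icc_self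
      have hc : ContinuousOn (fun x : ℝ => x ^ α) (Icc (0:ℝ) 1) :=
        fun x _ => (Real.continuousAt_rpow_const x α (Or.inr (by linarith))).continuousWithinAt
      exact hc.mul ((hv_cont.pow 2).continuousOn)
    have hb' : IntegrableOn (fun x : ℝ => x ^ (α-2) * (((1-α)^2/4)*(u x)^2)) (Ioo (0:ℝ) 1) :=
      (intervalIntegrable_iff.mp ((intervalIntegral.intervalIntegrable_rpow' (by linarith)).mul_continuousOn
        ((continuous_const.mul (hu_cont.pow 2)).continuousOn))).mono_set hsub
    have hb : IntegrableOn (fun x : ℝ => ((1-α)^2/4) * (u x)^2 / x ^ (2-α)) (Ioo (0:ℝ) 1) := by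
      apply hb'.congr_fun ?_ measurableSet_Ioo
      intro x hx
      have hx0 : (0:ℝ) < x := hx.1
      show x ^ (α-2) * (((1-α)^2/4)*(u x)^2) = ((1-α)^2/4) * (u x)^2 / x ^ (2-α)
      rw [show α-2 = -(2-α) by ring, Real.rpow_neg hx0.le, div_eq_mul_inv]
      ring
    have hint2 : IntegrableOn
        (fun x : ℝ => x ^ α * (deriv u x)^2 - ((1 - α)^2 / 4) * (u x)^2 / x ^ (2 - α))
        (Ioo (0:ℝ) 1) := ha.sub hb
    -- pointwise inequality
    have hpt : ∀ x ∈ Ioo (0:ℝ) 1, x ^ (2:ℝ) * (deriv u x)^2 ≤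
        (1 + 4 * (1 - α) * (α - 3) / (2 - α)^2) *
          (x ^ α * (deriv u x)^2 - ((1 - α)^2 / 4) * (u x)^2 / x ^ (2 - α)) + ψ x := by
      intro x hx
      obtain ⟨hx0, hx1⟩ := hx
      have hX0 : (0:ℝ) < x ^ (α-1) := Real.rpow_pos_of_pos hx0 _
      have hXx : x ≤ x ^ (α-1) := by
        nth_rewrite 1 [← Real.rpow_one x]
        exact Real.rpow_le_rpow_of_exponent_ge hx0 hx1.le (by linarith)
      have hX1 : x ^ (α-1) ≤ 1 := Real.rpow_le_one hx0.le hx1.le (by linarith)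
      have hG := Gexpr_nonneg (α-1) x (x ^ (α-1)) (u x) (deriv u x)
        (by linarith) hβ1 hx0 hXx hX1
      have hr1 : x ^ α = x * x ^ (α-1) := by
        nth_rewrite 1 [show α = 1 + (α-1) by ring]
        rw [Real.rpow_add hx0, Real.rpow_one]
      have hr2 : x ^ (2-α) = x / x ^ (α-1) := by
        rw [show (2-α) = 1 - (α-1) by ring, Real.rpow_sub hx0, Real.rpow_one]
      have hr3 : x ^ (α-2) = x ^ (α-1) / x := by
        rw [show (α-2) = (α-1) - 1 by ring, Real.rpow_sub hx0, Real.rpow_one]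
      have hr4 : x ^ (2:ℝ) = x * x := by
        rw [show (2:ℝ) = 1+1 by norm_num, Real.rpow_add hx0, Real.rpow_one]
      simp only [hψ]
      rw [hr1, hr2, hr3, hr4]
      have hdiv : (0:ℝ) ≤ Gexpr (α-1) x (x ^ (α-1)) (u x) (deriv u x) / (x*(2-α)^2) :=
        div_nonneg hG (by positivity)
      rw [← sub_nonneg]
      have hxne : x ≠ 0 := hx0.ne'
      have hXne : x ^ (α-1) ≠ 0 := hX0.ne'
      have h2αne : (2-α) ≠ 0 := h2α.ne'
      convert hdiv using 1
      rw [hA, hB]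
      simp only [Gexpr]
      field_simp
      ring
    have hRint : IntegrableOn
        (fun x : ℝ => (1 + 4 * (1 - α) * (α - 3) / (2 - α)^2) *
          (x ^ α * (deriv u x)^2 - ((1 - α)^2 / 4) * (u x)^2 / x ^ (2 - α)) + ψ x)
        (Ioo (0:ℝ) 1) := (hint2.const_mul _).add hψint
    have hmono : ∫ x in Ioo (0:ℝ) 1, x ^ (2:ℝ) * (deriv u x)^2 ≤
        ∫ x in Ioo (0:ℝ) 1, ((1 + 4 * (1 - α) * (α - 3) / (2 - α)^2) *
          (x ^ α * (deriv u x)^2 - ((1 - α)^2 / 4) * (u x)^2 / x ^ (2 - α)) + ψ x) :=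
      setIntegral_mono_on hint1 hRint measurableSet_Ioo hpt
    have hsplit : ∫ x in Ioo (0:ℝ) 1, ((1 + 4 * (1 - α) * (α - 3) / (2 - α)^2) *
          (x ^ α * (deriv u x)^2 - ((1 - α)^2 / 4) * (u x)^2 / x ^ (2 - α)) + ψ x)
        = (1 + 4 * (1 - α) * (α - 3) / (2 - α)^2) *
            (∫ x in Ioo (0:ℝ) 1,
              (x ^ α * (deriv u x)^2 - ((1 - α)^2 / 4) * (u x)^2 / x ^ (2 - α)))
          + ∫ x in Ioo (0:ℝ) 1, ψ x := by
      rw [integral_add (hint2.const_mul _) hψint, integral_const_mul]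
    rw [hsplit, hψIoo0, add_zero] at hmono
    exact hmono
end

section
/- For all α ∈ [0,1), all λ > 0, and all u ∈ C_c^∞(0,1), the sharp Hardy–Poincaré inequality ∫₀¹ u² dx ≤ c_α ∫₀¹ (x^α u'² − μ(α) u²/x^{2-α}) dx holds with c_α = min(4/((1-α)(3-α)), 16/(2-α)²), where μ(α) = (1-α)²/4. -/
open Set MeasureTheory

set_option maxHeartbeats 2000000 in
theorem sharp_hardy_poincare_weakly_degenerate
    (α : ℝ) (hα : α ∈ Set.Ico (0:ℝ) 1)
    (lam : ℝ) (hlam : 0 < lam)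
    (u : ℝ → ℝ) (hu : ContDiff ℝ (⊤ : ℕ∞) u)
    (hsupp : ∀ x : ℝ, x ∉ Set.Ioo (0:ℝ) 1 → u x = 0) :
    ∫ x in Set.Ioo (0:ℝ) 1, (u x)^2 ≤
      min (4 / ((1 - α) * (3 - α))) (16 / (2 - α)^2) *
        ∫ x in Set.Ioo (0:ℝ) 1,
          (x ^ α * (deriv u x)^2 - ((1 - α)^2 / 4) * (u x)^2 / x ^ (2 - α)) := by
  obtain ⟨hα0, hα1⟩ := hα
  obtain ⟨β, hβdef⟩ : ∃ β : ℝ, β = (1 - α) / 2 := ⟨_, rfl⟩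
  obtain ⟨s, hsdef⟩ : ∃ s : ℝ, s = (2 - α) / 2 := ⟨_, rfl⟩
  have hβ0 : 0 ≤ β := by rw [hβdef]; linarith
  have hs0 : 0 < s := by rw [hsdef]; linarith
  have h0 : u 0 = 0 := hsupp 0 (by simp)
  have h1 : u 1 = 0 := hsupp 1 (by simp)
  have hcu : Continuous u := hu.continuous
  have hdu : Differentiable ℝ u := hu.differentiable (by simp)
  have hcu' : Continuous (deriv u) := hu.continuous_deriv (by simp)
  obtain ⟨M, hM⟩ : ∃ M, ∀ x ∈ Icc (0:ℝ) 1, |deriv u x| ≤ M := by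
    obtain ⟨C, hC⟩ := isCompact_Icc.exists_bound_of_continuousOn
      (s := Icc (0:ℝ) 1) hcu'.continuousOn
    exact ⟨C, fun x hx => hC x hx⟩
  have hM0 : 0 ≤ M := le_trans (abs_nonneg _) (hM 0 ⟨le_refl _, zero_le_one⟩)
  have hub : ∀ x ∈ Icc (0:ℝ) 1, |u x| ≤ M * x := by
    intro x hx
    have := Convex.norm_image_sub_le_of_norm_hasDerivWithin_le
      (f := u) (f' := deriv u) (s := Icc (0:ℝ) 1) (C := M)
      (fun y _ => (hdu y).hasDerivAt.hasDerivWithinAt)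
      (fun y hy => hM y hy) (convex_Icc 0 1) ⟨le_refl _, zero_le_one⟩ hx
    simpa [h0, Real.norm_eq_abs, abs_of_nonneg hx.1] using this
  -- basic pointwise facts for x ∈ Ioc 0 1
  have hfacts : ∀ x ∈ Ioc (0:ℝ) 1,
      0 < x ^ α ∧ x ^ α ≤ 1 ∧ x ^ (α-1) * x = x ^ α ∧ x ^ (α-2) * x^2 = x ^ α
        ∧ x ^ (2-α) = x^2 / x ^ α ∧ x^2 ≤ x ^ α := by
    intro x hx
    have hx0 : (0:ℝ) < x := hx.1
    have hx1 : x ≤ 1 := hx.2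
    have hq0 : 0 < x ^ α := Real.rpow_pos_of_pos hx0 _
    have hxsq : x ^ (2:ℝ) = x^2 := by
      rw [show (2:ℝ) = ((2:ℕ):ℝ) by norm_num, Real.rpow_natCast]
    refine ⟨hq0, Real.rpow_le_one hx0.le hx1 hα0, ?_, ?_, ?_, ?_⟩
    · rw [← Real.rpow_add_one hx0.ne' (α-1)]; norm_num
    · rw [← hxsq, ← Real.rpow_add hx0]; norm_num
    · rw [eq_div_iff hq0.ne', ← Real.rpow_add hx0]
      rw [show 2 - α + α = (2:ℝ) by ring, hxsq]
    · have : x ^ (2:ℝ) ≤ x ^ α := Real.rpow_le_rpow_of_exponent_ge hx0 hx1 (by linarith)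
      rwa [hxsq] at this
  -- F and its derivative g
  set F : ℝ → ℝ := fun x => (β * x ^ (α - 1) - s * x) * (u x)^2 with hFdef
  set g : ℝ → ℝ := fun x =>
      (β * (α - 1) * x ^ (α - 2) - s) * (u x)^2
      + (β * x ^ (α - 1) - s * x) * (2 * u x * deriv u x) with hgdef
  have hFderiv : ∀ x ∈ Ioo (0:ℝ) 1, HasDerivAt F (g x) x := by
    intro x hx
    have hx0 : (0:ℝ) < x := hx.1
    have h1' : HasDerivAt (fun y : ℝ => y ^ (α - 1)) ((α - 1) * x ^ (α - 1 - 1)) x :=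
      Real.hasDerivAt_rpow_const (Or.inl hx0.ne')
    have hpow : α - 1 - 1 = α - 2 := by ring
    rw [hpow] at h1'
    have hw : HasDerivAt (fun y : ℝ => β * y ^ (α - 1) - s * y)
        (β * ((α - 1) * x ^ (α - 2)) - s) x := by
      have h4 := (h1'.const_mul β).sub ((hasDerivAt_id x).const_mul s)
      rw [mul_one] at h4; exact h4
    have hu2 : HasDerivAt (fun y => (u y)^2) (2 * u x * deriv u x) x := by
      have h2 : HasDerivAt (fun y => u y * u y) (deriv u x * u x + u x * deriv u x) x :=
        (hdu x).hasDerivAt.mul (hdu x).hasDerivAt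
      have h3 : HasDerivAt (fun y => u y * u y) (2 * u x * deriv u x) x := by
        convert h2 using 1; ring
      simpa [pow_two] using h3
    have := hw.mul hu2
    refine this.congr_deriv ?_
    simp only [hgdef]
    ring
  -- bound |g| on Ioc 0 1
  have hgbound : ∀ x ∈ Ioc (0:ℝ) 1, |g x| ≤ (β + s) * M^2 + 2 * M^2 * (β + s) := by
    intro x hx
    obtain ⟨hq0, hq1, hr, ht, h2a, hx2q⟩ := hfacts x hx
    have hx0 : (0:ℝ) < x := hx.1
    have hx1 : x ≤ 1 := hx.2
    have hxm : x ∈ Icc (0:ℝ) 1 := ⟨hx0.le, hx1⟩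
    have hau : |u x| ≤ M * x := hub x hxm
    have hbu : |deriv u x| ≤ M := hM x hxm
    have ha2 : (u x)^2 ≤ M^2 * x^2 := by
      have h := pow_le_pow_left₀ (abs_nonneg (u x)) hau 2
      rw [sq_abs, mul_pow] at h; exact h
    have hrpos : (0:ℝ) < x ^ (α-1) := Real.rpow_pos_of_pos hx0 _
    have htpos : (0:ℝ) < x ^ (α-2) := Real.rpow_pos_of_pos hx0 _
    have hβtn : (0:ℝ) ≤ β * x ^ (α-2) := mul_nonneg hβ0 htpos.le
    have hβrn : (0:ℝ) ≤ β * x ^ (α-1) := mul_nonneg hβ0 hrpos.le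
    have hneg : β * (α - 1) * x ^ (α-2) ≤ 0 := by
      have h4 : β * (α - 1) ≤ 0 := mul_nonpos_of_nonneg_of_nonpos hβ0 (by linarith)
      exact mul_nonpos_of_nonpos_of_nonneg h4 htpos.le
    have h2' : β * (1 - α) * x ^ (α-2) ≤ β * x ^ (α-2) := by
      have h4 : β * (1 - α) ≤ β := by nlinarith
      exact mul_le_mul_of_nonneg_right h4 htpos.le
    have habs1 : |β * (α - 1) * x ^ (α - 2) - s| ≤ β * x ^ (α-2) + s := by
      rw [abs_sub_le_iff]
      constructor
      · linarith
      · nlinarith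
    have habs2 : |β * x ^ (α - 1) - s * x| ≤ β * x ^ (α-1) + s * x := by
      rw [abs_sub_le_iff]
      have hsx : (0:ℝ) ≤ s * x := mul_nonneg hs0.le hx0.le
      constructor
      · linarith
      · linarith
    have hu2M : (u x)^2 ≤ M^2 := by
      have hx2 : x^2 ≤ 1 := by nlinarith
      nlinarith [sq_nonneg M]
    have e1 : (β * x ^ (α-2) + s) * (u x)^2 ≤ (β + s) * M^2 := by
      have h5 : x ^ (α-2) * (u x)^2 ≤ M^2 := by
        calc x ^ (α-2) * (u x)^2 ≤ x ^ (α-2) * (M^2 * x^2) :=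
              mul_le_mul_of_nonneg_left ha2 htpos.le
          _ = M^2 * (x ^ (α-2) * x^2) := by ring
          _ = M^2 * x ^ α := by rw [ht]
          _ ≤ M^2 * 1 := mul_le_mul_of_nonneg_left hq1 (sq_nonneg M)
          _ = M^2 := mul_one _
      have h6 := mul_le_mul_of_nonneg_left h5 hβ0
      have h7 := mul_le_mul_of_nonneg_left hu2M hs0.le
      have expand : (β * x ^ (α-2) + s) * (u x)^2
          = β * (x ^ (α-2) * (u x)^2) + s * (u x)^2 := by ring
      rw [expand]
      have : (β + s) * M^2 = β * M^2 + s * M^2 := by ring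
      rw [this]
      exact add_le_add h6 h7
    have e2 : (β * x ^ (α-1) + s * x) * |2 * u x * deriv u x| ≤ 2 * M^2 * (β + s) := by
      have hprod : |2 * u x * deriv u x| ≤ 2 * (M * x) * M := by
        rw [abs_mul, abs_mul, abs_two]
        gcongr
      have hfac : (0:ℝ) ≤ β * x ^ (α-1) + s * x :=
        add_nonneg hβrn (mul_nonneg hs0.le hx0.le)
      have hq : β * x ^ (α-1) * x ≤ β := by
        calc β * x ^ (α-1) * x = β * (x ^ (α-1) * x) := by ring
          _ = β * x ^ α := by rw [hr]
          _ ≤ β * 1 := mul_le_mul_of_nonneg_left hq1 hβ0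
          _ = β := mul_one _
      have hsx : s * x^2 ≤ s := by nlinarith
      calc (β * x ^ (α-1) + s * x) * |2 * u x * deriv u x|
          ≤ (β * x ^ (α-1) + s * x) * (2 * (M * x) * M) :=
            mul_le_mul_of_nonneg_left hprod hfac
        _ = 2 * M^2 * (β * x ^ (α-1) * x + s * x^2) := by ring
        _ ≤ 2 * M^2 * (β + s) := by
            have h8 : β * x ^ (α-1) * x + s * x^2 ≤ β + s := add_le_add hq hsx
            exact mul_le_mul_of_nonneg_left h8 (by positivity)
    calc |g x| ≤ |(β * (α - 1) * x ^ (α - 2) - s) * (u x)^2|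
        + |(β * x ^ (α - 1) - s * x) * (2 * u x * deriv u x)| := abs_add_le _ _
      _ = |β * (α - 1) * x ^ (α - 2) - s| * (u x)^2
        + |β * x ^ (α - 1) - s * x| * |2 * u x * deriv u x| := by
          rw [abs_mul, abs_mul, abs_of_nonneg (sq_nonneg (u x))]
      _ ≤ (β * x ^ (α-2) + s) * (u x)^2
        + (β * x ^ (α-1) + s * x) * |2 * u x * deriv u x| :=
          add_le_add (mul_le_mul_of_nonneg_right habs1 (sq_nonneg _))
            (mul_le_mul_of_nonneg_right habs2 (abs_nonneg _))
      _ ≤ (β + s) * M^2 + 2 * M^2 * (β + s) := add_le_add e1 e2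
  -- measurability
  have hrm : Measurable fun x : ℝ => x ^ (α-1) := by fun_prop
  have htm : Measurable fun x : ℝ => x ^ (α-2) := by fun_prop
  have hqm : Measurable fun x : ℝ => x ^ α := by fun_prop
  have h2am : Measurable fun x : ℝ => x ^ (2-α) := by fun_prop
  have hgmeas : AEStronglyMeasurable g volume := by
    apply Measurable.aestronglyMeasurable
    exact (((htm.const_mul _).sub measurable_const).mul
        (hcu.measurable.pow measurable_const)).add
      (((hrm.const_mul _).sub (measurable_id.const_mul _)).mul
        ((hcu.measurable.const_mul _).mul hcu'.measurable))
  have hgintc : IntegrableOn g (Ioc (0:ℝ) 1) volume :=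
    Measure.integrableOn_of_bounded (measure_Ioc_lt_top).ne hgmeas
      (by rw [ae_restrict_iff' measurableSet_Ioc]
          exact ae_of_all _ fun x hx => by
            simpa [Real.norm_eq_abs] using hgbound x hx)
  have hgint' : IntervalIntegrable g volume 0 1 := by
    rw [intervalIntegrable_iff_integrableOn_Ioc_of_le zero_le_one]
    exact hgintc
  -- continuity of F on Icc 0 1
  have hFcont : ContinuousOn F (Icc 0 1) := by
    intro x hx
    rcases eq_or_lt_of_le hx.1 with h | h
    · -- x = 0
      have hx0 : x = 0 := h.symm
      subst hx0
      have hF0 : F 0 = 0 := by simp [hFdef, h0]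
      rw [ContinuousWithinAt, hF0]
      apply squeeze_zero_norm' (a := fun y => ((β + s) * M^2) * y)
      · filter_upwards [self_mem_nhdsWithin] with y hy
        rcases eq_or_lt_of_le hy.1 with hy0 | hy0
        · rw [← hy0]
          simp [hFdef, h0]
        · obtain ⟨hq0, hq1, hr, ht, h2a, hx2q⟩ := hfacts y ⟨hy0, hy.2⟩
          have hau : |u y| ≤ M * y := hub y hy
          have ha2 : (u y)^2 ≤ M^2 * y^2 := by
            have h := pow_le_pow_left₀ (abs_nonneg (u y)) hau 2
            rw [sq_abs, mul_pow] at h; exact h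
          have hrpos : (0:ℝ) < y ^ (α-1) := Real.rpow_pos_of_pos hy0 _
          have habs : |β * y ^ (α-1) - s * y| ≤ β * y ^ (α-1) + s * y := by
            rw [abs_sub_le_iff]
            have hβrn : (0:ℝ) ≤ β * y ^ (α-1) := mul_nonneg hβ0 hrpos.le
            have hsy : (0:ℝ) ≤ s * y := mul_nonneg hs0.le hy0.le
            constructor
            · linarith
            · linarith
          have h5 : y ^ (α-1) * (u y)^2 ≤ M^2 * y := by
            calc y ^ (α-1) * (u y)^2 ≤ y ^ (α-1) * (M^2 * y^2) :=
                  mul_le_mul_of_nonneg_left ha2 hrpos.le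
              _ = M^2 * (y ^ (α-1) * y) * y := by ring
              _ = M^2 * y ^ α * y := by rw [hr]
              _ ≤ M^2 * 1 * y := by
                  have := mul_le_mul_of_nonneg_left hq1 (sq_nonneg M)
                  exact mul_le_mul_of_nonneg_right this hy0.le
              _ = M^2 * y := by ring
          have h6 : s * y * (u y)^2 ≤ s * M^2 * y := by
            have hy2 : (u y)^2 ≤ M^2 := by nlinarith [hy.2, hy0.le, sq_nonneg M]
            calc s * y * (u y)^2 ≤ s * y * M^2 :=
                  mul_le_mul_of_nonneg_left hy2 (mul_nonneg hs0.le hy0.le)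
              _ = s * M^2 * y := by ring
          calc ‖F y‖ = |β * y ^ (α-1) - s * y| * (u y)^2 := by
                rw [hFdef]
                simp only [Real.norm_eq_abs]
                rw [abs_mul, abs_of_nonneg (sq_nonneg (u y))]
            _ ≤ (β * y ^ (α-1) + s * y) * (u y)^2 :=
                mul_le_mul_of_nonneg_right habs (sq_nonneg _)
            _ = β * (y ^ (α-1) * (u y)^2) + s * y * (u y)^2 := by ring
            _ ≤ β * (M^2 * y) + s * M^2 * y := by
                have := mul_le_mul_of_nonneg_left h5 hβ0
                linarith
            _ = ((β + s) * M^2) * y := by ring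
      · have h7 : Filter.Tendsto (fun y : ℝ => ((β + s) * M^2) * y) (nhds 0)
            (nhds (((β + s) * M^2) * 0)) :=
          (continuous_const.mul continuous_id).tendsto 0
        rw [mul_zero] at h7
        exact h7.mono_left nhdsWithin_le_nhds
    · -- 0 < x
      apply ContinuousAt.continuousWithinAt
      apply ContinuousAt.mul
      · apply ContinuousAt.sub
        · exact (Real.continuousAt_rpow_const x (α-1) (Or.inl h.ne')).const_mul _
        · exact (continuous_const.mul continuous_id).continuousAt
      · exact (hcu.pow 2).continuousAt
  -- FTC : integral of g over Ioo 0 1 is zero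
  have hF1 : F 1 = 0 := by simp [hFdef, h1]
  have hF0 : F 0 = 0 := by simp [hFdef, h0]
  have hFTC : ∫ x in Ioo (0:ℝ) 1, g x = 0 := by
    have hsub := intervalIntegral.integral_eq_sub_of_hasDeriv_right_of_le zero_le_one
      hFcont (fun x hx => (hFderiv x hx).hasDerivWithinAt) hgint'
    rw [intervalIntegral.integral_of_le zero_le_one, integral_Ioc_eq_integral_Ioo] at hsub
    rw [hsub, hF1, hF0, sub_zero]
  -- integrand A
  set A : ℝ → ℝ := fun x =>
    x ^ α * (deriv u x)^2 - ((1 - α)^2 / 4) * (u x)^2 / x ^ (2 - α) with hAdef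
  have hAmeas : AEStronglyMeasurable A volume := by
    apply Measurable.aestronglyMeasurable
    exact (hqm.mul (hcu'.measurable.pow measurable_const)).sub
      (((hcu.measurable.pow measurable_const).const_mul _).div h2am)
  have hAbound : ∀ x ∈ Ioc (0:ℝ) 1, ‖A x‖ ≤ M^2 + M^2 := by
    intro x hx
    obtain ⟨hq0, hq1, hr, ht, h2a, hx2q⟩ := hfacts x hx
    have hx0 : (0:ℝ) < x := hx.1
    have hxm : x ∈ Icc (0:ℝ) 1 := ⟨hx0.le, hx.2⟩
    have hau : |u x| ≤ M * x := hub x hxm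
    have hbu : |deriv u x| ≤ M := hM x hxm
    have ha2 : (u x)^2 ≤ M^2 * x^2 := by
      have h := pow_le_pow_left₀ (abs_nonneg (u x)) hau 2
      rw [sq_abs, mul_pow] at h; exact h
    have hb2 : (deriv u x)^2 ≤ M^2 := by
      have h := pow_le_pow_left₀ (abs_nonneg (deriv u x)) hbu 2
      rw [sq_abs] at h; exact h
    have hterm1a : (0:ℝ) ≤ x ^ α * (deriv u x)^2 := by positivity
    have hterm1b : x ^ α * (deriv u x)^2 ≤ M^2 := by
      calc x ^ α * (deriv u x)^2 ≤ 1 * M^2 :=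
            mul_le_mul hq1 hb2 (sq_nonneg _) zero_le_one
        _ = M^2 := one_mul _
    have hp0 : (0:ℝ) < x ^ (2 - α) := Real.rpow_pos_of_pos hx0 _
    have hterm2a : (0:ℝ) ≤ ((1 - α)^2 / 4) * (u x)^2 / x ^ (2 - α) := by positivity
    have hterm2b : ((1 - α)^2 / 4) * (u x)^2 / x ^ (2 - α) ≤ M^2 := by
      have hre : ((1 - α)^2 / 4) * (u x)^2 / x ^ (2 - α)
          = ((1 - α)^2 / 4) * (u x)^2 * x ^ α / x^2 := by
        rw [h2a]; field_simp
      rw [hre, div_le_iff₀ (by positivity : (0:ℝ) < x^2)]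
      have hμ1 : (1 - α)^2 / 4 ≤ 1 := by nlinarith
      have c1 : ((1 - α)^2 / 4) * (u x)^2 ≤ (u x)^2 := by
        have := mul_le_mul_of_nonneg_right hμ1 (sq_nonneg (u x))
        linarith
      calc ((1 - α)^2 / 4) * (u x)^2 * x ^ α ≤ (M^2 * x^2) * 1 := by
            apply mul_le_mul (c1.trans ha2) hq1 hq0.le (by positivity)
        _ = M^2 * x^2 := mul_one _
    rw [Real.norm_eq_abs, abs_sub_le_iff]
    constructor
    · linarith
    · linarith
  have hAint : IntegrableOn A (Ioo (0:ℝ) 1) volume := by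
    apply IntegrableOn.mono_set ?_ Ioo_subset_Ioc_self
    exact Measure.integrableOn_of_bounded (measure_Ioc_lt_top).ne hAmeas
      (by rw [ae_restrict_iff' measurableSet_Ioc]
          exact ae_of_all _ fun x hx => hAbound x hx)
  have hu2int : IntegrableOn (fun x => (u x)^2) (Ioo (0:ℝ) 1) volume :=
    ((hcu.pow 2).integrableOn_Icc).mono_set Ioo_subset_Icc_self
  have hgint : IntegrableOn g (Ioo (0:ℝ) 1) volume :=
    hgintc.mono_set Ioo_subset_Ioc_self
  -- pointwise inequality
  have hpt : ∀ x ∈ Ioo (0:ℝ) 1, s^2 * (u x)^2 + g x ≤ A x := by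
    intro x hx
    obtain ⟨hq0, hq1, hr, ht, h2a, hx2q⟩ := hfacts x (Ioo_subset_Ioc_self hx)
    have hx0 : (0:ℝ) < x := hx.1
    have hrw1 : x ^ (α-1) = x ^ α / x := by
      rw [eq_div_iff hx0.ne']; exact hr
    have hrw2 : x ^ (α-2) = x ^ α / x^2 := by
      rw [eq_div_iff (by positivity : (x:ℝ)^2 ≠ 0)]; exact ht
    rw [hAdef, hgdef]
    simp only []
    rw [hrw1, hrw2, h2a, hβdef, hsdef]
    rw [← sub_nonneg]
    have key : x ^ α * (deriv u x)^2
          - (1 - α)^2 / 4 * (u x)^2 / (x^2 / x ^ α)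
          - (((2 - α) / 2)^2 * (u x)^2
            + (((1 - α) / 2 * (α - 1) * (x ^ α / x^2) - (2 - α) / 2) * (u x)^2
              + ((1 - α) / 2 * (x ^ α / x) - (2 - α) / 2 * x)
                * (2 * u x * deriv u x)))
        = ((x * x ^ α * deriv u x - ((1 - α) / 2 * x ^ α - (2 - α) / 2 * x^2) * u x)^2
            + ((2 - α) / 2)^2 * (x ^ α - x^2) * x^2 * (u x)^2)
          / (x^2 * x ^ α) := by
      field_simp
      ring
    rw [key]
    apply div_nonneg
    · apply add_nonneg (sq_nonneg _)
      apply mul_nonneg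
      apply mul_nonneg
      · exact mul_nonneg (sq_nonneg _) (by linarith)
      · exact sq_nonneg x
      · exact sq_nonneg (u x)
    · positivity
  -- combine
  have hsum_int : IntegrableOn (fun x => s^2 * (u x)^2 + g x) (Ioo (0:ℝ) 1) volume :=
    (hu2int.const_mul _).add hgint
  have hmono : ∫ x in Ioo (0:ℝ) 1, (s^2 * (u x)^2 + g x)
      ≤ ∫ x in Ioo (0:ℝ) 1, A x :=
    setIntegral_mono_on hsum_int hAint measurableSet_Ioo hpt
  have hsplit : ∫ x in Ioo (0:ℝ) 1, (s^2 * (u x)^2 + g x)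
      = s^2 * ∫ x in Ioo (0:ℝ) 1, (u x)^2 := by
    rw [integral_add (hu2int.const_mul _) hgint, hFTC, add_zero,
      integral_const_mul]
  have hKey : s^2 * ∫ x in Ioo (0:ℝ) 1, (u x)^2 ≤ ∫ x in Ioo (0:ℝ) 1, A x := by
    rw [← hsplit]; exact hmono
  have hu2nn : 0 ≤ ∫ x in Ioo (0:ℝ) 1, (u x)^2 :=
    setIntegral_nonneg measurableSet_Ioo (fun x _ => sq_nonneg _)
  have hAnn : 0 ≤ ∫ x in Ioo (0:ℝ) 1, A x := by
    have : (0:ℝ) ≤ s^2 * ∫ x in Ioo (0:ℝ) 1, (u x)^2 := by positivity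
    linarith
  -- final arithmetic
  have hs2 : (0:ℝ) < s^2 := by positivity
  have hcmin : 1 / s^2 ≤ min (4 / ((1 - α) * (3 - α))) (16 / (2 - α)^2) := by
    apply le_min
    · rw [div_le_div_iff₀ hs2 (by nlinarith : (0:ℝ) < (1 - α) * (3 - α))]
      rw [hsdef]; nlinarith
    · rw [div_le_div_iff₀ hs2 (by nlinarith : (0:ℝ) < (2 - α)^2)]
      rw [hsdef]; nlinarith
  calc ∫ x in Ioo (0:ℝ) 1, (u x)^2
      ≤ (1 / s^2) * ∫ x in Ioo (0:ℝ) 1, A x := by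
        rw [one_div, inv_mul_eq_div, le_div_iff₀ hs2, mul_comm]
        exact hKey
    _ ≤ min (4 / ((1 - α) * (3 - α))) (16 / (2 - α)^2) * ∫ x in Ioo (0:ℝ) 1, A x :=
        mul_le_mul_of_nonneg_right hcmin hAnn
end

section
/- Let α ∈ [0,2), μ(α) = (1-α)²/4, and u ∈ C_c^∞(0,1). Then ∫₀¹ (x u'(x) + (α/4) u(x))² dx ≤ ∫₀¹ (x^α u'(x)² − μ(α) u(x)²/x^{2-α}) dx. -/
open Set MeasureTheory

private lemma abs_sub_two (p q : ℝ) : |p - q| ≤ |p| + |q| := by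
  rw [sub_eq_add_neg]
  exact (abs_add_le p (-q)).trans (by rw [abs_neg])

private lemma abs_sub_four (a b c d : ℝ) : |a - b - c - d| ≤ |a| + |b| + |c| + |d| := by
  linarith [abs_sub_two (a - b - c) d, abs_sub_two (a - b) c, abs_sub_two a b]

set_option maxHeartbeats 1000000 in
private lemma key_algebra (α x P U V A : ℝ) (hx : x ≠ 0)
    (ha : P - x^2 ≠ 0) (hA : A = (α-1)/2) :
    P*V^2 - ((1-α)^2/4)*U^2/(x^2/P)
      - ((x*V + (α/4)*U)^2 + (-(α/4)*U^2 - (α/2)*x*U*V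
        - A*((α-1)*(P/x^2) - 1)*U^2 - 2*A*(P/x - x)*U*V))
    = ((P - x^2)*V + A*(P/x - x)*U)^2/(P - x^2) + (3*(α-2)^2/16)*U^2 := by
  subst hA
  field_simp
  ring

set_option maxHeartbeats 1600000 in
theorem multiplier_square_bound
    (α : ℝ) (hα : α ∈ Set.Ico (0:ℝ) 2)
    (u : ℝ → ℝ) (hu : ContDiff ℝ (⊤ : ℕ∞) u)
    (hsupp : ∀ x : ℝ, x ∉ Set.Ioo (0:ℝ) 1 → u x = 0) :
    ∫ x in Set.Ioo (0:ℝ) 1, (x * deriv u x + (α / 4) * u x)^2 ≤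
      ∫ x in Set.Ioo (0:ℝ) 1,
        (x ^ α * (deriv u x)^2 - ((1 - α)^2 / 4) * (u x)^2 / x ^ (2 - α)) := by
  obtain ⟨hα0, hα2⟩ := hα
  set v := deriv u with hv
  have hucont : Continuous u := hu.continuous
  have hvcont : Continuous v := hu.continuous_deriv (by simp)
  have hu0 : u 0 = 0 := hsupp 0 (by simp)
  have hu1 : u 1 = 0 := hsupp 1 (by simp)
  -- compact support and bounds
  have hcs : HasCompactSupport u :=
    HasCompactSupport.intro (isCompact_Icc (a := (0:ℝ)) (b := 1))
      (fun x hx => hsupp x (fun h => hx ⟨h.1.le, h.2.le⟩))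
  obtain ⟨M, hM⟩ := (hcs.deriv).exists_bound_of_continuous hvcont
  have hM' : ∀ x : ℝ, |v x| ≤ M := fun x => by simpa using hM x
  have hM0 : 0 ≤ M := le_trans (abs_nonneg _) (hM' 0)
  have hub : ∀ x : ℝ, 0 ≤ x → |u x| ≤ M * x := by
    intro x hx
    have h := Convex.norm_image_sub_le_of_norm_deriv_le (𝕜 := ℝ) (f := u) (s := univ)
      (fun y _ => (hu.differentiable (by simp)).differentiableAt) (fun y _ => hM y)
      convex_univ (mem_univ 0) (mem_univ x)
    simpa [hu0, Real.norm_eq_abs, abs_of_nonneg hx] using h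
  set A : ℝ := (α - 1) / 2 with hA
  set E : ℝ → ℝ := fun x => -(α/4)*(u x)^2 - (α/2)*x*(u x)*(v x)
      - A*((α-1)*x^(α-2) - 1)*(u x)^2 - 2*A*(x^(α-1) - x)*(u x)*(v x) with hE
  set φ : ℝ → ℝ := fun x => -(α/4)*x*(u x)^2 - A*(x^(α-1) - x)*(u x)^2 with hφ
  -- pointwise bounds
  have hbds : ∀ x ∈ Ioo (0:ℝ) 1,
      (u x)^2 ≤ M^2 ∧ |x*(u x)*(v x)| ≤ M^2 ∧ x^(α-2)*(u x)^2 ≤ M^2 ∧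
        x^(α-1)*|u x| ≤ M := by
    intro x hx
    obtain ⟨hx0, hx1⟩ := hx
    have hua := hub x hx0.le
    have hva := hM' x
    have hu2 : (u x)^2 ≤ (M*x)^2 := by
      rw [← sq_abs]
      exact pow_le_pow_left₀ (abs_nonneg _) hua 2
    have hxa : x ^ α ≤ 1 := Real.rpow_le_one hx0.le hx1.le hα0
    have hx2 : x ^ ((2:ℝ)) = x ^ 2 := by
      rw [show (2:ℝ) = ((2:ℕ):ℝ) by norm_num, Real.rpow_natCast]
    have hP2 : x ^ (α-2) * x^2 = x ^ α := by
      rw [← hx2, ← Real.rpow_add hx0]; norm_num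
    have hQ1 : x ^ (α-1) * x = x ^ α := by
      nth_rewrite 2 [show x = x ^ (1:ℝ) from (Real.rpow_one x).symm]
      rw [← Real.rpow_add hx0]; norm_num
    have hP0 : (0:ℝ) ≤ x ^ (α-2) := (Real.rpow_pos_of_pos hx0 _).le
    have hQ0 : (0:ℝ) ≤ x ^ (α-1) := (Real.rpow_pos_of_pos hx0 _).le
    have hxx : x^2 ≤ 1 := by nlinarith
    have hu2' : (u x)^2 ≤ M^2 * x^2 := by nlinarith [hu2]
    refine ⟨by nlinarith [sq_nonneg M, hxx, hu2'], ?_, ?_, ?_⟩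
    · rw [abs_mul, abs_mul, abs_of_pos hx0, mul_assoc]
      have h9 : |u x| * |v x| ≤ (M*x)*M :=
        mul_le_mul hua hva (abs_nonneg _) (mul_nonneg hM0 hx0.le)
      have h10 : x * (|u x| * |v x|) ≤ x * ((M*x)*M) :=
        mul_le_mul_of_nonneg_left h9 hx0.le
      nlinarith [h10, sq_nonneg M, hxx]
    · calc x^(α-2)*(u x)^2 ≤ x^(α-2)*(M*x)^2 := mul_le_mul_of_nonneg_left hu2 hP0
        _ = M^2 * (x^(α-2)*x^2) := by ring
        _ = M^2 * x^α := by rw [hP2]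
        _ ≤ M^2 * 1 := by nlinarith
        _ = M^2 := by ring
    · calc x^(α-1)*|u x| ≤ x^(α-1)*(M*x) := mul_le_mul_of_nonneg_left hua hQ0
        _ = M*(x^(α-1)*x) := by ring
        _ = M * x^α := by rw [hQ1]
        _ ≤ M * 1 := by nlinarith
        _ = M := by ring
  -- pointwise inequality
  have hpt : ∀ x ∈ Ioo (0:ℝ) 1,
      (x*v x + (α/4)*u x)^2 + E x ≤ x^α*(v x)^2 - ((1-α)^2/4)*(u x)^2/x^(2-α) := by
    intro x hx
    obtain ⟨hx0, hx1⟩ := hx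
    have hX0 : (0:ℝ) < x ^ α := Real.rpow_pos_of_pos hx0 α
    have hx2 : x ^ ((2:ℝ)) = x ^ 2 := by
      rw [show (2:ℝ) = ((2:ℕ):ℝ) by norm_num, Real.rpow_natCast]
    have ha : x^2 < x ^ α := by
      have h := Real.rpow_lt_rpow_of_exponent_gt hx0 hx1 hα2
      rwa [hx2] at h
    have h1 : x ^ (α-1) = x ^ α / x := by rw [Real.rpow_sub hx0, Real.rpow_one]
    have h2 : x ^ (α-2) = x ^ α / x^2 := by rw [Real.rpow_sub hx0, hx2]
    have h3 : x ^ (2-α) = x^2 / x ^ α := by rw [Real.rpow_sub hx0, hx2]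
    have hxne : x ≠ 0 := hx0.ne'
    have hXne : x ^ α ≠ 0 := hX0.ne'
    have hane : x ^ α - x^2 ≠ 0 := ne_of_gt (by linarith)
    have hEx : E x = -(α/4)*(u x)^2 - (α/2)*x*(u x)*(v x)
        - A*((α-1)*(x^α/x^2) - 1)*(u x)^2 - 2*A*(x^α/x - x)*(u x)*(v x) := by
      simp only [hE]
      rw [h1, h2]
    have key := key_algebra α x (x^α) (u x) (v x) A hxne hane hA
    have hs1 : 0 ≤ ((x^α - x^2)*(v x) + A*(x^α/x - x)*(u x))^2/(x^α - x^2) :=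
      div_nonneg (sq_nonneg _) (by linarith)
    have hs2 : 0 ≤ (3*(α-2)^2/16)*(u x)^2 := by positivity
    rw [h3, hEx]
    linarith [key, hs1, hs2]
  -- derivative of φ
  have hderivφ : ∀ x ∈ Ioo (0:ℝ) 1, HasDerivAt φ (E x) x := by
    intro x hx
    have hx0 := hx.1
    have hderu : HasDerivAt u (v x) x := ((hu.differentiable (by simp)) x).hasDerivAt
    have hu2 : HasDerivAt (fun y => (u y)^2) (2 * u x ^ 1 * v x) x := hderu.pow 2
    have hid : HasDerivAt (fun y : ℝ => y) 1 x := hasDerivAt_id x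
    have hrp : HasDerivAt (fun y : ℝ => y ^ (α-1)) ((α-1) * x ^ (α-1-1)) x :=
      Real.hasDerivAt_rpow_const (Or.inl hx0.ne')
    have ht1 : HasDerivAt (fun y : ℝ => -(α/4)*y) (-(α/4)) x := by
      simpa using hid.const_mul (-(α/4))
    have hT1 : HasDerivAt (fun y : ℝ => -(α/4)*y*(u y)^2)
        (-(α/4)*(u x)^2 + (-(α/4)*x)*(2*(u x)^1*(v x))) x := ht1.mul hu2
    have ht2 : HasDerivAt (fun y : ℝ => A*(y^(α-1) - y)) (A*((α-1)*x^(α-1-1) - 1)) x :=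
      (hrp.sub hid).const_mul A
    have hT2 : HasDerivAt (fun y : ℝ => A*(y^(α-1) - y)*(u y)^2)
        ((A*((α-1)*x^(α-1-1) - 1))*(u x)^2 + (A*(x^(α-1)-x))*(2*(u x)^1*(v x))) x :=
      ht2.mul hu2
    have hsum := hT1.sub hT2
    simp only [hφ, hE]
    refine hsum.congr_deriv ?_
    rw [show α-1-1 = α-2 by ring]
    ring
  -- continuity of φ on [0,1]
  have hφcont : ContinuousOn φ (Icc 0 1) := by
    rw [hφ]
    intro x hx
    rcases eq_or_lt_of_le hx.1 with h0 | h0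
    · -- continuity at 0 by squeezing
      have hx0 : x = 0 := h0.symm
      subst hx0
      have hφ0 : (fun x : ℝ => -(α/4)*x*(u x)^2 - A*(x^(α-1) - x)*(u x)^2) 0 = 0 := by
        simp [hu0]
      unfold ContinuousWithinAt
      rw [hφ0]
      apply squeeze_zero_norm' (a := fun y => ((α/4 + 2 * |A|)*M^2) * y)
      · apply eventually_nhdsWithin_of_forall
        intro y hy
        rcases eq_or_lt_of_le hy.1 with h0' | h0'
        · rw [← h0']
          simp [hu0]
        · have hy1 := hy.2
          have hua := hub y h0'.le
          have hu2 : (u y)^2 ≤ (M*y)^2 := by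
            rw [← sq_abs]
            exact pow_le_pow_left₀ (abs_nonneg _) hua 2
          have hya : y ^ α ≤ 1 := Real.rpow_le_one h0'.le hy1 hα0
          have hy2 : y ^ ((2:ℝ)) = y ^ 2 := by
            rw [show (2:ℝ) = ((2:ℕ):ℝ) by norm_num, Real.rpow_natCast]
          have hQ1 : y ^ (α-1) * y^2 = y ^ α * y := by
            rw [← hy2, ← Real.rpow_add h0', show α - 1 + 2 = α + 1 by ring,
              Real.rpow_add h0', Real.rpow_one]
          have hQ0 : (0:ℝ) ≤ y ^ (α-1) := (Real.rpow_pos_of_pos h0' _).le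
          have hyy : y^2 ≤ 1 := by nlinarith
          have hu2' : (u y)^2 ≤ M^2 * y^2 := by nlinarith [hu2]
          have hyu : y*(u y)^2 ≤ M^2*y := by
            nlinarith [hu2', hyy, sq_nonneg M, h0'.le, mul_nonneg (sq_nonneg M) h0'.le]
          have hQb : y^(α-1)*(u y)^2 ≤ M^2 * y := by
            calc y^(α-1)*(u y)^2 ≤ y^(α-1)*(M*y)^2 := mul_le_mul_of_nonneg_left hu2 hQ0
              _ = M^2 * (y^(α-1)*y^2) := by ring
              _ = M^2 * (y^α * y) := by rw [hQ1]
              _ ≤ M^2 * (1 * y) :=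
                mul_le_mul_of_nonneg_left
                  (mul_le_mul_of_nonneg_right hya h0'.le) (sq_nonneg M)
              _ = M^2 * y := by ring
          rw [Real.norm_eq_abs]
          have htri := abs_sub_two (-(α/4)*y*(u y)^2) (A*(y^(α-1) - y)*(u y)^2)
          have e1 : |(-(α/4)*y*(u y)^2)| ≤ (α/4)*M^2*y := by
            rw [show -(α/4)*y*(u y)^2 = -((α/4)*(y*(u y)^2)) by ring, abs_neg,
              abs_of_nonneg (by positivity)]
            calc (α/4)*(y*(u y)^2) ≤ (α/4)*(M^2*y) :=
                mul_le_mul_of_nonneg_left hyu (by positivity)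
              _ = (α/4)*M^2*y := by ring
          have e2 : |A*(y^(α-1) - y)*(u y)^2| ≤ 2 * |A| * M^2 * y := by
            rw [show A*(y^(α-1) - y)*(u y)^2 = A*((y^(α-1) - y)*(u y)^2) by ring, abs_mul]
            have h5 : |(y^(α-1) - y)*(u y)^2| ≤ 2*M^2*y := by
              rw [abs_mul, abs_of_nonneg (sq_nonneg (u y))]
              have h6 : |y^(α-1) - y| * (u y)^2 ≤ (y^(α-1) + y) * (u y)^2 := by
                apply mul_le_mul_of_nonneg_right _ (sq_nonneg _)
                refine (abs_sub_two _ _).trans ?_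
                rw [abs_of_nonneg hQ0, abs_of_nonneg h0'.le]
              refine h6.trans ?_
              nlinarith [hQb, hyu]
            calc |A| * |(y^(α-1) - y)*(u y)^2| ≤ |A| * (2*M^2*y) :=
                mul_le_mul_of_nonneg_left h5 (abs_nonneg _)
              _ = 2 * |A| * M^2 * y := by ring
          calc |(-(α/4)*y*(u y)^2 - A*(y^(α-1) - y)*(u y)^2)|
              ≤ |(-(α/4)*y*(u y)^2)| + |A*(y^(α-1) - y)*(u y)^2| := htri
            _ ≤ (α/4)*M^2*y + 2 * |A| * M^2 * y := add_le_add e1 e2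
            _ = ((α/4 + 2 * |A|)*M^2) * y := by ring
      · have : Filter.Tendsto (fun y : ℝ => ((α/4 + 2 * |A|)*M^2) * y) (nhds 0) (nhds 0) := by
          simpa using (continuous_mul_left ((α/4 + 2 * |A|)*M^2)).tendsto (0:ℝ)
        exact this.mono_left nhdsWithin_le_nhds
    · -- continuity at x > 0
      have hrc : ContinuousAt (fun y : ℝ => y ^ (α-1)) x :=
        Real.continuousAt_rpow_const x _ (Or.inl h0.ne')
      exact (((continuousAt_const.mul continuousAt_id).mul ((hucont.continuousAt).pow 2)).sub
        ((continuousAt_const.mul (hrc.sub continuousAt_id)).mul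
          ((hucont.continuousAt).pow 2))).continuousWithinAt
  -- integrability helper
  have hbd_int : ∀ (f : ℝ → ℝ) (C : ℝ), ContinuousOn f (Ioo 0 1) →
      (∀ x ∈ Ioo (0:ℝ) 1, |f x| ≤ C) → IntegrableOn f (Ioo 0 1) := by
    intro f C hc hb
    refine ⟨hc.aestronglyMeasurable measurableSet_Ioo, ?_⟩
    apply HasFiniteIntegral.restrict_of_bounded (C := C)
      (by simp [Real.volume_Ioo] : volume (Ioo (0:ℝ) 1) < ⊤)
    filter_upwards [ae_restrict_mem measurableSet_Ioo] with x hx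
    simpa [Real.norm_eq_abs] using hb x hx
  -- integrability of E
  have hEcont : ContinuousOn E (Ioo 0 1) := by
    rw [hE]
    have hrc1 : ContinuousOn (fun y : ℝ => y ^ (α-2)) (Ioo 0 1) :=
      fun y hy => (Real.continuousAt_rpow_const y _ (Or.inl hy.1.ne')).continuousWithinAt
    have hrc2 : ContinuousOn (fun y : ℝ => y ^ (α-1)) (Ioo 0 1) :=
      fun y hy => (Real.continuousAt_rpow_const y _ (Or.inl hy.1.ne')).continuousWithinAt
    exact ((((continuous_const.mul (hucont.pow 2)).continuousOn).sub
        ((((continuous_const.mul continuous_id).mul hucont).mul hvcont).continuousOn)).sub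
        ((continuousOn_const.mul ((continuousOn_const.mul hrc1).sub continuousOn_const)).mul
          ((hucont.pow 2).continuousOn))).sub
        (((continuousOn_const.mul (hrc2.sub continuousOn_id)).mul
          hucont.continuousOn).mul hvcont.continuousOn)
  have hEbd : ∀ x ∈ Ioo (0:ℝ) 1,
      |E x| ≤ (α/4)*M^2 + (α/2)*M^2 + |A| * (|α - 1| * M ^ 2 + M ^ 2) + 2 * |A| * (M ^ 2 + M ^ 2) := by
    intro x hx
    obtain ⟨hb1, hb2, hb3, hb4⟩ := hbds x hx
    obtain ⟨hx0, hx1⟩ := hx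
    have hva := hM' x
    have hP0 : (0:ℝ) ≤ x ^ (α-2) := (Real.rpow_pos_of_pos hx0 _).le
    have h4' : |x^(α-1)*(u x)*(v x)| ≤ M^2 := by
      rw [abs_mul, abs_mul, abs_of_nonneg (Real.rpow_nonneg hx0.le _)]
      calc x^(α-1) * |u x| * |v x| ≤ M * M :=
          mul_le_mul hb4 hva (abs_nonneg _) hM0
        _ = M^2 := (sq M).symm
    simp only [hE]
    have e1 : |(-(α/4)*(u x)^2)| ≤ (α/4)*M^2 := by
      rw [show -(α/4)*(u x)^2 = -((α/4)*(u x)^2) by ring, abs_neg,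
        abs_of_nonneg (by positivity)]
      nlinarith
    have e2 : |(α/2)*x*(u x)*(v x)| ≤ (α/2)*M^2 := by
      rw [show (α/2)*x*(u x)*(v x) = (α/2)*(x*(u x)*(v x)) by ring, abs_mul,
        abs_of_nonneg (by positivity : (0:ℝ) ≤ α/2)]
      nlinarith [abs_nonneg (x*(u x)*(v x))]
    have e3 : |A*((α-1)*x^(α-2) - 1)*(u x)^2| ≤ |A| * (|α - 1| * M ^ 2 + M ^ 2) := by
      rw [show A*((α-1)*x^(α-2) - 1)*(u x)^2 = A*(((α-1)*x^(α-2) - 1)*(u x)^2) by ring,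
        abs_mul]
      apply mul_le_mul_of_nonneg_left _ (abs_nonneg A)
      calc |((α-1)*x^(α-2) - 1)*(u x)^2|
          = |(α-1)*x^(α-2) - 1| * (u x)^2 := by
            rw [abs_mul, abs_of_nonneg (sq_nonneg (u x))]
        _ ≤ (|α-1| * x^(α-2) + 1) * (u x)^2 := by
            apply mul_le_mul_of_nonneg_right _ (sq_nonneg _)
            refine (abs_sub_two _ _).trans ?_
            rw [abs_mul, abs_of_nonneg hP0, abs_one]
        _ = |α-1| * (x^(α-2)*(u x)^2) + (u x)^2 := by ring
        _ ≤ |α-1| * M^2 + M^2 :=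
            add_le_add (mul_le_mul_of_nonneg_left hb3 (abs_nonneg _)) hb1
    have e4 : |2*A*(x^(α-1) - x)*(u x)*(v x)| ≤ 2 * |A| * (M ^ 2 + M ^ 2) := by
      rw [show 2*A*(x^(α-1) - x)*(u x)*(v x)
          = (2*A)*((x^(α-1)*(u x)*(v x)) - (x*(u x)*(v x))) by ring, abs_mul]
      have h8 : |x^(α-1)*(u x)*(v x) - x*(u x)*(v x)| ≤ M^2 + M^2 :=
        (abs_sub_two _ _).trans (add_le_add h4' hb2)
      calc |2*A| * |x^(α-1)*(u x)*(v x) - x*(u x)*(v x)|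
          ≤ |2*A| * (M^2 + M^2) := mul_le_mul_of_nonneg_left h8 (abs_nonneg _)
        _ = 2 * |A| * (M^2 + M^2) := by rw [abs_mul]; norm_num
    exact (abs_sub_four _ _ _ _).trans
      (add_le_add (add_le_add (add_le_add e1 e2) e3) e4)
  have hEint : IntegrableOn E (Ioo 0 1) := hbd_int E _ hEcont hEbd
  -- integrability of LHS integrand
  have hLcont : Continuous (fun x : ℝ => (x*v x + (α/4)*u x)^2) :=
    ((continuous_id.mul hvcont).add (continuous_const.mul hucont)).pow 2
  have hLint : IntegrableOn (fun x : ℝ => (x*v x + (α/4)*u x)^2) (Ioo 0 1) :=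
    (hLcont.integrableOn_Icc (a := 0) (b := 1)).mono_set Ioo_subset_Icc_self
  -- integrability of RHS integrand
  have hRcont : ContinuousOn
      (fun x : ℝ => x^α*(v x)^2 - ((1-α)^2/4)*(u x)^2/x^(2-α)) (Ioo 0 1) := by
    have hrc0 : ContinuousOn (fun y : ℝ => y ^ α) (Ioo 0 1) :=
      fun y hy => (Real.continuousAt_rpow_const y _ (Or.inl hy.1.ne')).continuousWithinAt
    have hrc3 : ContinuousOn (fun y : ℝ => y ^ (2-α)) (Ioo 0 1) :=
      fun y hy => (Real.continuousAt_rpow_const y _ (Or.inl hy.1.ne')).continuousWithinAt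
    exact (hrc0.mul (hvcont.pow 2).continuousOn).sub
      ((continuousOn_const.mul (hucont.pow 2).continuousOn).div hrc3
        (fun y hy => (Real.rpow_pos_of_pos hy.1 _).ne'))
  have hRbd : ∀ x ∈ Ioo (0:ℝ) 1,
      |x^α*(v x)^2 - ((1-α)^2/4)*(u x)^2/x^(2-α)| ≤ M^2 + ((1-α)^2/4)*M^2 := by
    intro x hx
    obtain ⟨hb1, hb2, hb3, hb4⟩ := hbds x hx
    obtain ⟨hx0, hx1⟩ := hx
    have hvv : (v x)^2 ≤ M^2 := by
      rw [← sq_abs]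
      exact pow_le_pow_left₀ (abs_nonneg _) (hM' x) 2
    have hxa : x^α ≤ 1 := Real.rpow_le_one hx0.le hx1.le hα0
    have hXpos : 0 < x ^ α := Real.rpow_pos_of_pos hx0 α
    have hdiv : (u x)^2 / x^(2-α) = x^(α-2)*(u x)^2 := by
      rw [div_eq_mul_inv, ← Real.rpow_neg hx0.le, show -(2-α) = α-2 by ring]
      ring
    have h1 : (0:ℝ) ≤ x^α*(v x)^2 := mul_nonneg hXpos.le (sq_nonneg _)
    have h1' : x^α*(v x)^2 ≤ M^2 := by nlinarith [sq_nonneg (v x)]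
    have hrw : ((1-α)^2/4)*(u x)^2/x^(2-α) = ((1-α)^2/4)*((u x)^2/x^(2-α)) := by ring
    have h2' : ((1-α)^2/4)*((u x)^2/x^(2-α)) ≤ ((1-α)^2/4)*M^2 := by
      rw [hdiv]
      exact mul_le_mul_of_nonneg_left hb3 (by positivity)
    have h2'' : (0:ℝ) ≤ ((1-α)^2/4)*((u x)^2/x^(2-α)) := by
      rw [hdiv]
      have := (Real.rpow_pos_of_pos hx0 (α-2)).le
      positivity
    rw [hrw, abs_le]
    constructor <;> nlinarith
  have hRint : IntegrableOn
      (fun x : ℝ => x^α*(v x)^2 - ((1-α)^2/4)*(u x)^2/x^(2-α)) (Ioo 0 1) :=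
    hbd_int _ _ hRcont hRbd
  -- ∫ E = 0
  have hEzero : ∫ x in Ioo (0:ℝ) 1, E x = 0 := by
    have hEii : IntervalIntegrable E volume 0 1 :=
      (intervalIntegrable_iff_integrableOn_Ioc_of_le (by norm_num)).2
        (hEint.congr_set_ae (Ioo_ae_eq_Ioc).symm)
    have hFTC : ∫ x in (0:ℝ)..1, E x = φ 1 - φ 0 :=
      intervalIntegral.integral_eq_sub_of_hasDeriv_right_of_le (by norm_num) hφcont
        (fun x hx => (hderivφ x hx).hasDerivWithinAt) hEii
    have hφ1 : φ 1 = 0 := by simp [hφ, hu1]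
    have hφ0 : φ 0 = 0 := by simp [hφ, hu0]
    rw [← MeasureTheory.integral_Ioc_eq_integral_Ioo,
      ← intervalIntegral.integral_of_le (by norm_num : (0:ℝ) ≤ 1), hFTC, hφ1, hφ0]
    ring
  -- conclude
  have hmain : ∫ x in Ioo (0:ℝ) 1, ((x*v x + (α/4)*u x)^2 + E x) ≤
      ∫ x in Ioo (0:ℝ) 1, (x^α*(v x)^2 - ((1-α)^2/4)*(u x)^2/x^(2-α)) :=
    setIntegral_mono_on (hLint.add hEint) hRint measurableSet_Ioo hpt
  rw [integral_add hLint hEint, hEzero, add_zero] at hmain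
  exact hmain
end
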